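/- arXiv:1607.04080 — 10 statements merged into one kernel-verified Lean document; each statement's English description precedes it below -/
import Mathlib

section
/- Let I ⊆ ℝ be an interval, n a natural number, k ∈ {1,…,n}, and χ : {1,…,k} → {1,…,n} an injective map. Assume the mean M : Iⁿ → ℝ is χ-continuous and uniquely χ-reducible, with χ-reduction M_χ. Then for all x ∈ Iᵏ and all y ∈ [min(x₁,…,x_k), max(x₁,…,x_k)], one has sgn(M((x|χ)(y)) − y) = sgn(M_χ(x) − y). -/
/-- For a χ-continuous, uniquely χ-reducible mean `M` on an interval `I`,
`sgn(M((x|χ)(y)) − y) = sgn(M_χ(x) − y)` for all `y ∈ [min x, max x]`. -/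
theorem sign_of_reduced_mean
    (I : Set ℝ) (hI : Convex ℝ I)
    (n k : ℕ) (hk : 0 < k) (hkn : k ≤ n)
    (χ : Fin k → Fin n) (hχ : Function.Injective χ)
    (M : (Fin n → ℝ) → ℝ)
    (hM : ∀ x : Fin n → ℝ, (∀ i, x i ∈ I) → M x ∈ convexHull ℝ (Set.range x))
    (hMcont : ∀ x : Fin k → ℝ, (∀ j, x j ∈ I) →
      ContinuousOn (fun y => M (Function.extend χ x fun _ => y))
        (convexHull ℝ (Set.range x)))
    (Mχ : (Fin k → ℝ) → ℝ)
    (hMχ : ∀ x : Fin k → ℝ, (∀ j, x j ∈ I) →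
      Mχ x ∈ convexHull ℝ (Set.range x) ∧
      M (Function.extend χ x fun _ => Mχ x) = Mχ x ∧
      ∀ y ∈ convexHull ℝ (Set.range x),
        M (Function.extend χ x fun _ => y) = y → y = Mχ x)
    (x : Fin k → ℝ) (hx : ∀ j, x j ∈ I)
    (y : ℝ)
    (hy : y ∈ Set.Icc (Finset.univ.inf' ⟨⟨0, hk⟩, Finset.mem_univ _⟩ x)
        (Finset.univ.sup' ⟨⟨0, hk⟩, Finset.mem_univ _⟩ x)) :
    Real.sign (M (Function.extend χ x fun _ => y) - y) = Real.sign (Mχ x - y) := by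
  obtain ⟨hMχ1, hMχ2, hMχ3⟩ := hMχ x hx
  have hne : (Finset.univ : Finset (Fin k)).Nonempty := ⟨⟨0, hk⟩, Finset.mem_univ _⟩
  set m := Finset.univ.inf' hne x with hm
  set s := Finset.univ.sup' hne x with hs
  have hy' : y ∈ Set.Icc m s := hy
  have hms : m ≤ s :=
    le_trans (Finset.inf'_le _ (Finset.mem_univ (⟨0, hk⟩ : Fin k)))
      (Finset.le_sup' _ (Finset.mem_univ (⟨0, hk⟩ : Fin k)))
  -- the convex hull of the range is exactly [m, s]
  have hrange : Set.range x ⊆ Set.Icc m s := by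
    rintro z ⟨j, rfl⟩
    exact ⟨Finset.inf'_le _ (Finset.mem_univ j), Finset.le_sup' _ (Finset.mem_univ j)⟩
  have hIcc : convexHull ℝ (Set.range x) = Set.Icc m s := by
    apply Set.Subset.antisymm
    · exact convexHull_min hrange (convex_Icc m s)
    · obtain ⟨j0, _, hj0⟩ := Finset.exists_mem_eq_inf' hne x
      obtain ⟨j1, _, hj1⟩ := Finset.exists_mem_eq_sup' hne x
      have hm' : m ∈ convexHull ℝ (Set.range x) :=
        subset_convexHull ℝ _ ⟨j0, hj0.symm⟩
      have hs' : s ∈ convexHull ℝ (Set.range x) :=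
        subset_convexHull ℝ _ ⟨j1, hj1.symm⟩
      rw [← segment_eq_Icc hms]
      exact (convex_convexHull ℝ _).segment_subset hm' hs'
  -- [m, s] ⊆ I
  have hII : Set.Icc m s ⊆ I := by
    obtain ⟨j0, _, hj0⟩ := Finset.exists_mem_eq_inf' hne x
    obtain ⟨j1, _, hj1⟩ := Finset.exists_mem_eq_sup' hne x
    have := hI.ordConnected
    exact this.out (by rw [hm, hj0]; exact hx j0) (by rw [hs, hj1]; exact hx j1)
  -- values of M on extended tuples stay in [m, s]
  have hval : ∀ z ∈ Set.Icc m s, M (Function.extend χ x fun _ => z) ∈ Set.Icc m s := by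
    intro z hz
    have hrng : Set.range (Function.extend χ x fun _ => z) ⊆ Set.Icc m s := by
      rintro w ⟨i, rfl⟩
      by_cases h : ∃ j, χ j = i
      · obtain ⟨j, rfl⟩ := h
        rw [hχ.extend_apply]
        exact hrange ⟨j, rfl⟩
      · rw [Function.extend_apply' _ _ _ h]
        exact hz
    have hmem := hM _ (fun i => hII (hrng ⟨i, rfl⟩))
    exact convexHull_min hrng (convex_Icc m s) hmem
  set f : ℝ → ℝ := fun z => M (Function.extend χ x fun _ => z) - z with hf
  have hfc : ContinuousOn f (Set.Icc m s) := by
    have := hMcont x hx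
    rw [hIcc] at this
    exact this.sub continuousOn_id
  have hMχmem : Mχ x ∈ Set.Icc m s := hIcc ▸ hMχ1
  have hfm : 0 ≤ f m := sub_nonneg.mpr (hval m ⟨le_refl m, hms⟩).1
  have hfs : f s ≤ 0 := sub_nonpos.mpr (hval s ⟨hms, le_refl s⟩).2
  -- key: for z ∈ [m,s], f z = 0 → z = Mχ x
  have huniq : ∀ z ∈ Set.Icc m s, f z = 0 → z = Mχ x := by
    intro z hz hfz
    exact hMχ3 z (hIcc ▸ hz) (by linarith [sub_eq_zero.mp hfz])
  rcases lt_trichotomy y (Mχ x) with hlt | heq | hgt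
  · -- y < Mχ x : f y > 0
    have hpos : 0 < f y := by
      by_contra h
      push_neg at h
      rcases eq_or_lt_of_le h with h0 | h0
      · exact absurd (huniq y hy' h0) (ne_of_lt hlt)
      · have hsub : Set.Icc (f y) (f m) ⊆ f '' Set.Icc m y :=
          intermediate_value_Icc' hy'.1
            (hfc.mono (Set.Icc_subset_Icc_right hy'.2))
        obtain ⟨z, hz, hfz⟩ := hsub ⟨le_of_lt h0, hfm⟩
        have hzms : z ∈ Set.Icc m s := ⟨hz.1, le_trans hz.2 hy'.2⟩
        have := huniq z hzms hfz
        linarith [hz.2, this ▸ hlt]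
    rw [Real.sign_of_pos hpos, Real.sign_of_pos (by linarith : (0:ℝ) < Mχ x - y)]
  · -- y = Mχ x : both sides zero
    rw [heq, hMχ2]
  · -- y > Mχ x : f y < 0
    have hneg : f y < 0 := by
      by_contra h
      push_neg at h
      rcases eq_or_lt_of_le h with h0 | h0
      · exact absurd (huniq y hy' h0.symm) (ne_of_gt hgt)
      · have hsub : Set.Icc (f s) (f y) ⊆ f '' Set.Icc y s :=
          intermediate_value_Icc' hy'.2
            (hfc.mono (Set.Icc_subset_Icc_left hy'.1))
        obtain ⟨z, hz, hfz⟩ := hsub ⟨hfs, le_of_lt h0⟩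
        have hzms : z ∈ Set.Icc m s := ⟨le_trans hy'.1 hz.1, hz.2⟩
        have := huniq z hzms hfz
        linarith [hz.1, this ▸ hgt]
    rw [Real.sign_of_neg hneg, Real.sign_of_neg (by linarith : Mχ x - y < 0)]
end

section
/- Let X be a real vector space, D ⊆ X a nonempty convex set, n a natural number, k ∈ {1,…,n}, and χ : {1,…,k} → {1,…,n} an injective map. Let ω = (ω₁,…,ωₙ) where each ωᵢ : D → ℝ is positive-valued. Then the functionally weighted arithmetic mean A^ω is uniquely χ-reducible and its χ-reduction is A^{ω_χ}; that is, for every x ∈ Dᵏ, the point y = (ω_{χ(1)}(x₁)x₁ + ⋯ + ω_{χ(k)}(x_k)x_k)/(ω_{χ(1)}(x₁) + ⋯ + ω_{χ(k)}(x_k)) is the unique solution y ∈ D of the equation A^ω((x|χ)(y)) = y. -/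
/-- The functionally weighted arithmetic mean `A^ω` is uniquely χ-reducible
with χ-reduction `A^{ω_χ}`. -/
theorem weighted_arithmetic_mean_chi_reduction
    {X : Type*} [AddCommGroup X] [Module ℝ X]
    (D : Set X) (hD : D.Nonempty) (hDconv : Convex ℝ D)
    (n k : ℕ) (hk : 0 < k) (hkn : k ≤ n)
    (χ : Fin k → Fin n) (hχ : Function.Injective χ)
    (ω : Fin n → X → ℝ) (hω : ∀ i, ∀ u ∈ D, 0 < ω i u)
    (x : Fin k → X) (hx : ∀ j, x j ∈ D) :
    letI Aω : (Fin n → X) → X := fun z => (∑ i, ω i (z i))⁻¹ • ∑ i, ω i (z i) • z i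
    letI y₀ : X := (∑ j, ω (χ j) (x j))⁻¹ • ∑ j, ω (χ j) (x j) • x j
    y₀ ∈ D ∧ Aω (Function.extend χ x fun _ => y₀) = y₀ ∧
      ∀ y ∈ D, Aω (Function.extend χ x fun _ => y) = y → y = y₀ := by
  haveI : Nonempty (Fin k) := Fin.pos_iff_nonempty.mp hk
  beta_reduce
  set S : ℝ := ∑ j, ω (χ j) (x j) with hSdef
  set Sg : X := ∑ j, ω (χ j) (x j) • x j with hSgdef
  have hS : 0 < S := Finset.sum_pos (fun j _ => hω _ _ (hx j)) Finset.univ_nonempty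
  set y₀ : X := S⁻¹ • Sg with hy₀
  set s : Finset (Fin n) := Finset.univ.image χ with hsdef
  set T : X → ℝ := fun y => ∑ i ∈ sᶜ, ω i y with hTdef
  have hz1 : ∀ (y : X) (j : Fin k), (Function.extend χ x fun _ => y) (χ j) = x j :=
    fun y j => hχ.extend_apply _ _ j
  have hz2 : ∀ (y : X), ∀ i ∈ sᶜ, (Function.extend χ x fun _ => y) i = y := by
    intro y i hi
    apply Function.extend_apply'
    rintro ⟨j, rfl⟩
    simp [hsdef] at hi
  have hinj : ∀ a ∈ (Finset.univ : Finset (Fin k)), ∀ b ∈ Finset.univ, χ a = χ b → a = b :=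
    fun a _ b _ h => hχ h
  have hT0 : ∀ y ∈ D, 0 ≤ T y := fun y hy => Finset.sum_nonneg fun i _ => (hω i y hy).le
  have key : ∀ y : X, (∑ i, ω i ((Function.extend χ x fun _ => y) i))⁻¹ •
      ∑ i, ω i ((Function.extend χ x fun _ => y) i) • ((Function.extend χ x fun _ => y) i)
      = (S + T y)⁻¹ • (Sg + T y • y) := by
    intro y
    have hden : ∑ i, ω i ((Function.extend χ x fun _ => y) i) = S + T y := by
      rw [← Finset.sum_add_sum_compl s]
      congr 1
      · rw [hsdef, Finset.sum_image hinj, hSdef]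
        exact Finset.sum_congr rfl fun j _ => by rw [hz1]
      · simp only [hTdef]
        exact Finset.sum_congr rfl fun i hi => by rw [hz2 y i hi]
    have hnum : ∑ i, ω i ((Function.extend χ x fun _ => y) i) •
        ((Function.extend χ x fun _ => y) i) = Sg + T y • y := by
      rw [← Finset.sum_add_sum_compl s]
      congr 1
      · rw [hsdef, Finset.sum_image hinj, hSgdef]
        exact Finset.sum_congr rfl fun j _ => by rw [hz1]
      · simp only [hTdef]
        rw [Finset.sum_smul]
        exact Finset.sum_congr rfl fun i hi => by rw [hz2 y i hi]
    rw [hden, hnum]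
  have hy₀D : y₀ ∈ D := by
    have h1 : y₀ = ∑ j, (S⁻¹ * ω (χ j) (x j)) • x j := by
      rw [hy₀, hSgdef, Finset.smul_sum]
      exact Finset.sum_congr rfl fun j _ => (smul_smul _ _ _)
    rw [h1]
    apply hDconv.sum_mem
    · exact fun j _ => mul_nonneg (inv_nonneg.mpr hS.le) (hω _ _ (hx j)).le
    · rw [← Finset.mul_sum, ← hSdef, inv_mul_cancel₀ hS.ne']
    · exact fun j _ => hx j
  have fix : ∀ y ∈ D, ((∑ i, ω i ((Function.extend χ x fun _ => y) i))⁻¹ •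
      ∑ i, ω i ((Function.extend χ x fun _ => y) i) • ((Function.extend χ x fun _ => y) i) = y
      ↔ S • y = Sg) := by
    intro y hy
    rw [key y]
    have hST : (0:ℝ) < S + T y := add_pos_of_pos_of_nonneg hS (hT0 y hy)
    constructor
    · intro h
      have h2 := congrArg (fun v => (S + T y) • v) h
      simp only [smul_smul, mul_inv_cancel₀ hST.ne', one_smul] at h2
      rw [add_smul] at h2
      exact (add_right_cancel h2).symm
    · intro h
      rw [← h, ← add_smul, smul_smul, inv_mul_cancel₀ hST.ne', one_smul]
  have hSeq : S • y₀ = Sg := by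
    rw [hy₀, smul_smul, mul_inv_cancel₀ hS.ne', one_smul]
  refine ⟨hy₀D, (fix y₀ hy₀D).mpr hSeq, ?_⟩
  intro y hy h
  have h1 := (fix y hy).mp h
  rw [hy₀, ← h1, smul_smul, inv_mul_cancel₀ hS.ne', one_smul]
end

section
/- Let X be a real Hausdorff topological vector space, D ⊆ X a nonempty convex set, n ≥ 1 a natural number, and E₁,…,Eₙ generalized deviation functions on D. Then for every x = (x₁,…,xₙ) ∈ Dⁿ there exists a unique y ∈ conv{x₁,…,xₙ} such that (E₁(x₁,y) + ⋯ + Eₙ(xₙ,y))(xᵢ − y) ≤ 0 for every i ∈ {1,…,n}. (Thus the generalized E-deviation mean D^E(x) is well defined.) -/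
/-!
Summing the deviations gives a single map `Φ v = ∑ j, E j (x j) v` with `-Φ` strictly monotone
and hemicontinuous on the compact convex set `K = conv{x₁,…,xₙ}`, and the mean is the solution
of the variational inequality `Φ y (z - y) ≤ 0` for all `z ∈ K`. Following Minty, one first
solves the dual inequality `Φ z (z - y) ≤ 0` for all `z ∈ K`: the sets of its solutions for a
fixed `z` are closed, and finitely many of them meet inside `K` by von Neumann's minimax theorem
applied to the matrix `Φ (c k) (c k - c j)`, whose symmetric part is nonpositive. Hemicontinuity
along segments turns a solution of the dual inequality into one of the original inequality, and
strict monotonicity makes it unique.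
-/

open Finset Set
open scoped Matrix

theorem Matrix.dotProduct_mulVec_self_nonpos {ι : Type*} [Fintype ι] {A : Matrix ι ι ℝ}
    (hA : ∀ k j, A k j + A j k ≤ 0) {q : ι → ℝ} (hq : 0 ≤ q) : q ⬝ᵥ A *ᵥ q ≤ 0 := by
  have hsymm : q ⬝ᵥ A *ᵥ q + q ⬝ᵥ A *ᵥ q = q ⬝ᵥ (A + Aᵀ) *ᵥ q := by
    rw [add_mulVec, dotProduct_add, mulVec_transpose, dotProduct_mulVec, dotProduct_comm]
  have : q ⬝ᵥ (A + Aᵀ) *ᵥ q ≤ 0 :=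
    sum_nonpos fun k _ => mul_nonpos_of_nonneg_of_nonpos (hq k) <|
      sum_nonpos fun j _ => mul_nonpos_of_nonpos_of_nonneg (hA k j) (hq j)
  linarith

theorem Matrix.exists_mem_stdSimplex_mulVec_nonpos {ι : Type*} [Fintype ι] [Nonempty ι]
    (A : Matrix ι ι ℝ) (hA : ∀ q ∈ stdSimplex ℝ ι, q ⬝ᵥ A *ᵥ q ≤ 0) :
    ∃ p ∈ stdSimplex ℝ ι, A *ᵥ p ≤ 0 := by
  classical
  set B : (ι → ℝ) →ₗ[ℝ] (ι → ℝ) →ₗ[ℝ] ℝ := Matrix.toLinearMap₂' ℝ A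
  have hΔ : (stdSimplex ℝ ι).Nonempty := ⟨_, single_mem_stdSimplex ℝ (Classical.arbitrary ι)⟩
  obtain ⟨p, hp, q, hq, hsaddle⟩ := Sion.exists_isSaddlePointOn (f := fun p q => B q p)
    hΔ (convex_stdSimplex ℝ ι) (isCompact_stdSimplex ℝ ι)
    (fun q _ => (B q).continuous_of_finiteDimensional.lowerSemicontinuous.lowerSemicontinuousOn _)
    (fun q _ => ((B q).convexOn (convex_stdSimplex ℝ ι)).quasiconvexOn)
    (convex_stdSimplex ℝ ι) hΔ (isCompact_stdSimplex ℝ ι)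
    (fun p _ =>
      (B.flip p).continuous_of_finiteDimensional.upperSemicontinuous.upperSemicontinuousOn _)
    (fun p _ => ((B.flip p).concaveOn (convex_stdSimplex ℝ ι)).quasiconcaveOn)
  refine ⟨p, hp, fun k => ?_⟩
  have := hsaddle q hq (Pi.single k 1) (single_mem_stdSimplex ℝ k)
  simp only [B, toLinearMap₂'_apply', single_dotProduct, one_mul] at this
  exact this.trans (hA q hq)

section MonotoneOperator

variable {X : Type*} [AddCommGroup X] [Module ℝ X] [TopologicalSpace X]

theorem exists_mem_convexHull_forall_apply_sub_nonpos {ι : Type*} [Fintype ι] [Nonempty ι]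
    (Φ : X → X →L[ℝ] ℝ) (c : ι → X) (hΦ : ∀ k j, (Φ (c k) - Φ (c j)) (c k - c j) ≤ 0) :
    ∃ y ∈ convexHull ℝ (range c), ∀ k, Φ (c k) (c k - y) ≤ 0 := by
  set A : Matrix ι ι ℝ := Matrix.of fun k j => Φ (c k) (c k - c j)
  have hA : ∀ k j, A k j + A j k ≤ 0 := fun k j => by
    have : A k j + A j k = (Φ (c k) - Φ (c j)) (c k - c j) := by
      simp only [A, Matrix.of_apply, sub_apply, map_sub]
      ring
    exact this ▸ hΦ k j
  obtain ⟨p, hp, hAp⟩ := A.exists_mem_stdSimplex_mulVec_nonpos fun q hq =>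
    Matrix.dotProduct_mulVec_self_nonpos hA hq.1
  refine ⟨∑ j, p j • c j, (convex_convexHull ℝ _).sum_mem (fun j _ => hp.1 j) hp.2
    fun j _ => subset_convexHull ℝ _ ⟨j, rfl⟩, fun k => ?_⟩
  have hsub : c k - ∑ j, p j • c j = ∑ j, p j • (c k - c j) := by
    simp only [smul_sub, sum_sub_distrib, ← sum_smul, hp.2, one_smul]
  have : Φ (c k) (c k - ∑ j, p j • c j) = A.mulVec p k := by
    simp only [hsub, map_sum, map_smul, smul_eq_mul, Matrix.mulVec, dotProduct, A,
      Matrix.of_apply, mul_comm]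
  exact this ▸ hAp k

theorem IsCompact.exists_forall_apply_sub_nonpos [IsTopologicalAddGroup X] {K : Set X}
    (hK : IsCompact K) (hKconv : Convex ℝ K) (hKne : K.Nonempty) (Φ : X → X →L[ℝ] ℝ)
    (hΦ : ∀ v ∈ K, ∀ w ∈ K, (Φ v - Φ w) (v - w) ≤ 0) :
    ∃ y ∈ K, ∀ z ∈ K, Φ z (z - y) ≤ 0 := by
  have hfinite : ∀ u : Finset K, (K ∩ ⋂ z ∈ u, {y | Φ z (z - y) ≤ 0}).Nonempty := fun u => by
    rcases u.eq_empty_or_nonempty with rfl | ⟨z₀, hz₀⟩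
    · simpa using hKne
    have : Nonempty u := ⟨⟨z₀, hz₀⟩⟩
    obtain ⟨y, hy, hyu⟩ := exists_mem_convexHull_forall_apply_sub_nonpos Φ
      (fun z : u => (z : X)) fun k j => hΦ _ (k : K).2 _ (j : K).2
    exact ⟨y, convexHull_min (range_subset_iff.2 fun z : u => (z : K).2) hKconv hy,
      mem_iInter₂.2 fun z hz => hyu ⟨z, hz⟩⟩
  obtain ⟨y, hyK, hy⟩ := hK.inter_iInter_nonempty (fun z : K => {y | Φ z (z - y) ≤ 0})
    (fun z => isClosed_le (by fun_prop) continuous_const) hfinite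
  exact ⟨y, hyK, fun z hz => mem_iInter.1 hy ⟨z, hz⟩⟩

/-- Minty's lemma. -/
theorem Convex.forall_apply_sub_nonpos_of_forall_apply_sub_nonpos [IsTopologicalAddGroup X]
    [ContinuousSMul ℝ X] {K : Set X} (hKconv : Convex ℝ K) (Φ : X → X →L[ℝ] ℝ)
    (hΦ : ∀ h, ContinuousOn (fun v => Φ v h) K) {y : X} (hy : y ∈ K)
    (hdual : ∀ z ∈ K, Φ z (z - y) ≤ 0) : ∀ z ∈ K, Φ y (z - y) ≤ 0 := by
  intro z hz
  set g : ℝ → X := ⇑(AffineMap.lineMap y z : ℝ →ᵃ[ℝ] X)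
  have hgK : MapsTo g (Icc 0 1) K := fun s hs => hKconv.lineMap_mem hy hz hs
  have hpos : ∀ s ∈ Ioc (0 : ℝ) 1, Φ (g s) (z - y) ≤ 0 := fun s hs => by
    have := hdual (g s) (hgK (Ioc_subset_Icc_self hs))
    rw [← vsub_eq_sub (g s), AffineMap.lineMap_vsub_left, vsub_eq_sub, map_smul,
      smul_eq_mul] at this
    exact nonpos_of_mul_nonpos_right this hs.1
  have hcont : ContinuousWithinAt (fun s => Φ (g s) (z - y)) (Ioc 0 1) 0 :=
    (((hΦ (z - y)).comp AffineMap.lineMap_continuous.continuousOn hgK).continuousWithinAt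
      (left_mem_Icc.2 zero_le_one)).mono Ioc_subset_Icc_self
  simpa [g] using hcont.closure_le (by simp [closure_Ioc]) continuousWithinAt_const hpos

theorem apply_sub_nonpos_of_mem_convexHull (f : X →L[ℝ] ℝ) {s : Set X} {y z : X}
    (hs : ∀ x ∈ s, f (x - y) ≤ 0) (hz : z ∈ convexHull ℝ s) : f (z - y) ≤ 0 := by
  have : convexHull ℝ s ⊆ {x | f x ≤ f y} :=
    convexHull_min (fun x hx => by simpa [sub_nonpos] using hs x hx)
      (convex_halfSpace_le f.toLinearMap.isLinear _)
  simpa [sub_nonpos] using this hz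

theorem eq_of_apply_sub_nonpos {Φ : X → X →L[ℝ] ℝ} {v w : X}
    (hΦ : v ≠ w → (Φ v - Φ w) (v - w) < 0) (hv : Φ v (w - v) ≤ 0) (hw : Φ w (v - w) ≤ 0) :
    v = w := by
  by_contra hvw
  have := hΦ hvw
  rw [← neg_sub v w, map_neg] at hv
  rw [sub_apply] at this
  linarith

end MonotoneOperator

theorem generalized_deviation_mean_well_defined_general
    {X : Type*} [AddCommGroup X] [Module ℝ X] [TopologicalSpace X]
    [IsTopologicalAddGroup X] [ContinuousSMul ℝ X]
    (D : Set X) (hDconv : Convex ℝ D)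
    (n : ℕ) (hn : 0 < n)
    (E : Fin n → X → X → X →L[ℝ] ℝ)
    (hEcont : ∀ i, ∀ u ∈ D, ∀ h : X, ContinuousOn (fun v => E i u v h) D)
    (hEmono : ∀ i, ∀ u ∈ D, ∀ v ∈ D, ∀ w ∈ D, v ≠ w → (E i u v - E i u w) (v - w) < 0)
    (x : Fin n → X) (hx : ∀ i, x i ∈ D) :
    ∃! y, y ∈ convexHull ℝ (Set.range x) ∧
      ∀ i, (∑ j, E j (x j) y) (x i - y) ≤ 0 := by
  have : Nonempty (Fin n) := Fin.pos_iff_nonempty.mp hn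
  set K := convexHull ℝ (range x)
  set Φ : X → X →L[ℝ] ℝ := fun v => ∑ j, E j (x j) v
  have hKD : K ⊆ D := convexHull_min (range_subset_iff.2 hx) hDconv
  have hxK : ∀ i, x i ∈ K := fun i => subset_convexHull ℝ _ ⟨i, rfl⟩
  have hstrict : ∀ v ∈ K, ∀ w ∈ K, v ≠ w → (Φ v - Φ w) (v - w) < 0 := fun v hv w hw hvw => by
    simpa [Φ, ← sum_sub_distrib] using sum_lt_sum_of_nonempty univ_nonempty fun j _ =>
      hEmono j (x j) (hx j) v (hKD hv) w (hKD hw) hvw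
  have hmono : ∀ v ∈ K, ∀ w ∈ K, (Φ v - Φ w) (v - w) ≤ 0 := fun v hv w hw => by
    rcases eq_or_ne v w with rfl | hvw
    · simp
    · exact (hstrict v hv w hw hvw).le
  have hcont : ∀ h, ContinuousOn (fun v => Φ v h) K := fun h => by
    simpa [Φ] using continuousOn_finsetSum _ fun j _ => (hEcont j (x j) (hx j) h).mono hKD
  obtain ⟨y, hyK, hy⟩ :=
    ((finite_range x).isCompact_convexHull (𝕜 := ℝ)).exists_forall_apply_sub_nonpos
      (convex_convexHull ℝ _) ⟨_, hxK ⟨0, hn⟩⟩ Φ hmono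
  have hVI := (convex_convexHull ℝ _).forall_apply_sub_nonpos_of_forall_apply_sub_nonpos Φ
    hcont hyK hy
  refine ⟨y, ⟨hyK, fun i => hVI _ (hxK i)⟩, fun y' ⟨hy'K, hy'⟩ => ?_⟩
  exact eq_of_apply_sub_nonpos (hstrict y' hy'K y hyK)
    (apply_sub_nonpos_of_mem_convexHull (Φ y') (forall_mem_range.2 hy') hyK) (hVI y' hy'K)

/-- Generalized deviation means are well defined: for generalized deviations
`E₁,…,Eₙ` on a convex set `D` and `x ∈ Dⁿ` there is a unique `y ∈ conv{x₁,…,xₙ}` with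
`(E₁(x₁,y) + ⋯ + Eₙ(xₙ,y))(xᵢ − y) ≤ 0` for all `i`. -/
theorem generalized_deviation_mean_well_defined
    {X : Type*} [AddCommGroup X] [Module ℝ X] [TopologicalSpace X]
    [IsTopologicalAddGroup X] [ContinuousSMul ℝ X] [T2Space X]
    (D : Set X) (hD : D.Nonempty) (hDconv : Convex ℝ D)
    (n : ℕ) (hn : 0 < n)
    (E : Fin n → X → X → X →L[ℝ] ℝ)
    (hE0 : ∀ i, ∀ u ∈ D, E i u u = 0)
    (hEcont : ∀ i, ∀ u ∈ D, ∀ h : X, ContinuousOn (fun v => E i u v h) D)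
    (hEmono : ∀ i, ∀ u ∈ D, ∀ v ∈ D, ∀ w ∈ D, v ≠ w → (E i u v - E i u w) (v - w) < 0)
    (x : Fin n → X) (hx : ∀ i, x i ∈ D) :
    ∃! y, y ∈ convexHull ℝ (Set.range x) ∧
      ∀ i, (∑ j, E j (x j) y) (x i - y) ≤ 0 :=
  generalized_deviation_mean_well_defined_general D hDconv n hn E hEcont hEmono x hx
end

section
/- Let I ⊆ ℝ be an interval, n ≥ 1 a natural number, and E₁,…,Eₙ : I × I → ℝ deviation functions. Then for every x ∈ Iⁿ and every y ∈ I, the equality E₁(x₁,y) + ⋯ + Eₙ(xₙ,y) = 0 holds if and only if y ∈ [min xᵢ, max xᵢ] and (E₁(x₁,y) + ⋯ + Eₙ(xₙ,y))·(xᵢ − y) ≤ 0 for every i ∈ {1,…,n}. (Hence on real intervals the generalized deviation mean coincides with the deviation mean.) -/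
/-- On a real interval, the defining equation of the deviation mean is
equivalent to the system of inequalities defining the generalized deviation mean. -/
theorem deviation_mean_eq_generalized_deviation_mean
    (I : Set ℝ) (hI : Convex ℝ I)
    (n : ℕ) (hn : 0 < n)
    (E : Fin n → ℝ → ℝ → ℝ)
    (hE0 : ∀ i, ∀ u ∈ I, E i u u = 0)
    (hEcont : ∀ i, ∀ u ∈ I, ContinuousOn (E i u) I)
    (hEanti : ∀ i, ∀ u ∈ I, StrictAntiOn (E i u) I)
    (x : Fin n → ℝ) (hx : ∀ i, x i ∈ I)
    (y : ℝ) (hy : y ∈ I) :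
    (∑ i, E i (x i) y = 0) ↔
      (y ∈ Set.Icc (Finset.univ.inf' ⟨⟨0, hn⟩, Finset.mem_univ _⟩ x)
          (Finset.univ.sup' ⟨⟨0, hn⟩, Finset.mem_univ _⟩ x) ∧
        ∀ i, (∑ j, E j (x j) y) * (x i - y) ≤ 0) := by
  have key : ∀ i, y < x i → 0 < E i (x i) y := fun i h => by
    have := hEanti i (x i) (hx i) hy (hx i) h
    simpa [hE0 i (x i) (hx i)] using this
  have key2 : ∀ i, x i < y → E i (x i) y < 0 := fun i h => by
    have := hEanti i (x i) (hx i) (hx i) hy h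
    simpa [hE0 i (x i) (hx i)] using this
  have keyle : ∀ i, y ≤ x i → 0 ≤ E i (x i) y := fun i h => by
    rcases eq_or_lt_of_le h with he | hlt
    · simp [← he, hE0 i y hy]
    · exact (key i hlt).le
  have keyle2 : ∀ i, x i ≤ y → E i (x i) y ≤ 0 := fun i h => by
    rcases eq_or_lt_of_le h with he | hlt
    · simp [he, hE0 i y hy]
    · exact (key2 i hlt).le
  have hne : (Finset.univ : Finset (Fin n)).Nonempty := ⟨⟨0, hn⟩, Finset.mem_univ _⟩
  constructor
  · intro hsum
    refine ⟨⟨?_, ?_⟩, fun i => by simp [hsum]⟩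
    · by_contra h
      push_neg at h
      have hlt : ∀ i, y < x i := fun i =>
        lt_of_lt_of_le h (Finset.inf'_le _ (Finset.mem_univ i))
      have : 0 < ∑ i, E i (x i) y :=
        Finset.sum_pos (fun i _ => key i (hlt i)) hne
      linarith
    · by_contra h
      push_neg at h
      have hlt : ∀ i, x i < y := fun i =>
        lt_of_le_of_lt (Finset.le_sup' _ (Finset.mem_univ i)) h
      have : ∑ i, E i (x i) y < 0 :=
        Finset.sum_neg (fun i _ => key2 i (hlt i)) hne
      linarith
  · rintro ⟨_, hineq⟩
    by_contra hsum
    rcases lt_or_gt_of_ne hsum with hneg | hpos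
    · have hxy : ∀ i, y ≤ x i := fun i => by nlinarith [hineq i]
      have : 0 ≤ ∑ i, E i (x i) y :=
        Finset.sum_nonneg fun i _ => keyle i (hxy i)
      linarith
    · have hxy : ∀ i, x i ≤ y := fun i => by nlinarith [hineq i]
      have : ∑ i, E i (x i) y ≤ 0 :=
        Finset.sum_nonpos fun i _ => keyle2 i (hxy i)
      linarith
end

section
/- Let X be a real Hausdorff topological vector space, D ⊆ X a nonempty convex set, n a natural number, k ∈ {1,…,n}, χ : {1,…,k} → {1,…,n} an injective map, and E₁,…,Eₙ generalized deviation functions on D. Then the generalized deviation mean D^E : Dⁿ → D is uniquely χ-reducible and its χ-reduction is the generalized deviation mean generated by E_χ = (E_{χ(1)},…,E_{χ(k)}): for every x ∈ Dᵏ, the point y = D^{E_χ}(x) is the unique solution y ∈ conv{x₁,…,x_k} of the equation D^E((x|χ)(y)) = y. -/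
/-!
Padding `x` along `χ` with copies of `y` only adds the terms `Eᵢ(y,y) = 0` to the sum, so the
inequalities defining `D^E((x|χ)(y)) = y` are those defining `D^{E_χ}(x) = y` together with
trivial ones `0 ≤ 0`. Uniqueness: each system of inequalities extends from the points `xⱼ` to
their convex hull, and the two resulting inequalities contradict the strict monotonicity of the
summed deviation `v ↦ ∑ Eⱼ(xⱼ,v)`.
-/

open Function Set

theorem Fintype.sum_extend_const_of_injective {ι κ α M : Type*} [Fintype ι] [Fintype κ]
    [AddCommMonoid M] {χ : κ → ι} (hχ : Injective χ) (F : ι → α → M) (x : κ → α) {y : α}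
    (hF : ∀ i, F i y = 0) :
    ∑ i, F i (extend χ x (fun _ => y) i) = ∑ j, F (χ j) (x j) :=
  (Fintype.sum_of_injective χ hχ _ _ (fun i hi => by rw [extend_apply' _ _ _ hi, hF])
    (fun j => by rw [hχ.extend_apply])).symm

theorem LinearMap.map_sub_nonpos_of_mem_convexHull {X : Type*} [AddCommGroup X] [Module ℝ X]
    (f : X →ₗ[ℝ] ℝ) {s : Set X} {c y : X} (hs : ∀ z ∈ s, f (z - c) ≤ 0)
    (hy : y ∈ convexHull ℝ s) : f (y - c) ≤ 0 := by
  simp only [map_sub, sub_nonpos] at hs ⊢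
  exact convexHull_min hs (convex_halfSpace_le f.isLinear (f c)) hy

section DeviationMean

variable {X : Type*} [AddCommGroup X] [Module ℝ X] [TopologicalSpace X] {ι : Type*} [Fintype ι]

/-- `y = D^E(x)` means this together with `y ∈ convexHull ℝ (range x)`. -/
def DeviationMeanIneq (E : ι → X → X → X →L[ℝ] ℝ) (x : ι → X) (y : X) : Prop :=
  ∀ i, (∑ i', E i' (x i') y) (x i - y) ≤ 0

theorem sum_deviation_strictAnti [Nonempty ι] {D : Set X} {E : ι → X → X → X →L[ℝ] ℝ}
    (hEmono : ∀ i, ∀ u ∈ D, ∀ v ∈ D, ∀ w ∈ D, v ≠ w → (E i u v - E i u w) (v - w) < 0)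
    {x : ι → X} (hx : ∀ i, x i ∈ D) {v w : X} (hv : v ∈ D) (hw : w ∈ D) (hvw : v ≠ w) :
    (∑ i, E i (x i) v - ∑ i, E i (x i) w) (v - w) < 0 := by
  rw [← Finset.sum_sub_distrib, sum_apply]
  exact Finset.sum_neg (fun i _ => hEmono i (x i) (hx i) v hv w hw hvw) Finset.univ_nonempty

theorem DeviationMeanIneq.eq {D : Set X} (hDconv : Convex ℝ D) {E : ι → X → X → X →L[ℝ] ℝ}
    (hEmono : ∀ i, ∀ u ∈ D, ∀ v ∈ D, ∀ w ∈ D, v ≠ w → (E i u v - E i u w) (v - w) < 0)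
    {x : ι → X} (hx : ∀ i, x i ∈ D) {y y' : X}
    (hy : y ∈ convexHull ℝ (range x)) (hy' : y' ∈ convexHull ℝ (range x))
    (hyE : DeviationMeanIneq E x y) (hy'E : DeviationMeanIneq E x y') : y = y' := by
  by_contra hne
  have hxD : convexHull ℝ (range x) ⊆ D := convexHull_min (range_subset_iff.2 hx) hDconv
  have : Nonempty ι := range_nonempty_iff_nonempty.1 (convexHull_nonempty_iff.1 ⟨y, hy⟩)
  have hlt := sum_deviation_strictAnti hEmono hx (hxD hy) (hxD hy') hne
  have hle : (∑ i, E i (x i) y) (y' - y) ≤ 0 :=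
    LinearMap.map_sub_nonpos_of_mem_convexHull (∑ i, E i (x i) y : X →L[ℝ] ℝ)
      (forall_mem_range.2 fun i => hyE i) hy'
  have hle' : (∑ i, E i (x i) y') (y - y') ≤ 0 :=
    LinearMap.map_sub_nonpos_of_mem_convexHull (∑ i, E i (x i) y' : X →L[ℝ] ℝ)
      (forall_mem_range.2 fun i => hy'E i) hy
  rw [← neg_sub y y', map_neg] at hle
  rw [sub_apply] at hlt
  linarith

theorem deviationMeanIneq_extend_iff {κ : Type*} [Fintype κ] {E : ι → X → X → X →L[ℝ] ℝ}
    {χ : κ → ι} (hχ : Injective χ) (x : κ → X) {y : X} (hE0 : ∀ i, E i y y = 0) :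
    DeviationMeanIneq E (extend χ x fun _ => y) y ↔ DeviationMeanIneq (fun j => E (χ j)) x y := by
  unfold DeviationMeanIneq
  rw [Fintype.sum_extend_const_of_injective hχ (fun i u => E i u y) x hE0]
  refine ⟨fun h j => by simpa only [hχ.extend_apply] using h (χ j), fun h i => ?_⟩
  by_cases hi : ∃ j, χ j = i
  · obtain ⟨j, rfl⟩ := hi
    rw [hχ.extend_apply]
    exact h j
  · rw [extend_apply' _ _ _ hi, sub_self, map_zero]

end DeviationMean

theorem generalized_deviation_mean_chi_reduction_general
    {X : Type*} [AddCommGroup X] [Module ℝ X] [TopologicalSpace X]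
    (D : Set X) (hDconv : Convex ℝ D)
    (n k : ℕ)
    (χ : Fin k → Fin n) (hχ : Function.Injective χ)
    (E : Fin n → X → X → X →L[ℝ] ℝ)
    (hE0 : ∀ i, ∀ u ∈ D, E i u u = 0)
    (hEmono : ∀ i, ∀ u ∈ D, ∀ v ∈ D, ∀ w ∈ D, v ≠ w → (E i u v - E i u w) (v - w) < 0)
    (x : Fin k → X) (hx : ∀ j, x j ∈ D)
    (y₀ : X)
    -- `y₀ = D^{E_χ}(x)`:
    (hy₀mem : y₀ ∈ convexHull ℝ (Set.range x))
    (hy₀ineq : ∀ j, (∑ j', E (χ j') (x j') y₀) (x j - y₀) ≤ 0) :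
    -- `y₀` solves `D^E((x|χ)(y₀)) = y₀` …
    (y₀ ∈ convexHull ℝ (Set.range (Function.extend χ x fun _ => y₀)) ∧
      ∀ i, (∑ i', E i' (Function.extend χ x (fun _ => y₀) i') y₀)
        (Function.extend χ x (fun _ => y₀) i - y₀) ≤ 0) ∧
    -- … and it is the unique such point in `conv{x₁,…,x_k}`:
    ∀ y ∈ convexHull ℝ (Set.range x),
      (y ∈ convexHull ℝ (Set.range (Function.extend χ x fun _ => y)) ∧
        ∀ i, (∑ i', E i' (Function.extend χ x (fun _ => y) i') y)
          (Function.extend χ x (fun _ => y) i - y) ≤ 0) → y = y₀ := by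
  have hxD : convexHull ℝ (range x) ⊆ D := convexHull_min (range_subset_iff.2 hx) hDconv
  have hreduce : ∀ y ∈ convexHull ℝ (range x),
      DeviationMeanIneq E (extend χ x fun _ => y) y ↔ DeviationMeanIneq (fun j => E (χ j)) x y :=
    fun y hy => deviationMeanIneq_extend_iff hχ x fun i => hE0 i y (hxD hy)
  refine ⟨⟨convexHull_mono ?_ hy₀mem, (hreduce y₀ hy₀mem).2 hy₀ineq⟩, ?_⟩
  · rw [range_extend hχ]
    exact subset_union_left
  · rintro y hy ⟨-, hyE⟩
    exact DeviationMeanIneq.eq hDconv (fun j => hEmono (χ j)) hx hy hy₀mem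
      ((hreduce y hy).1 hyE) hy₀ineq

/-- The generalized deviation mean `D^E` is uniquely χ-reducible with
χ-reduction `D^{E_χ}`: for `x ∈ Dᵏ`, the point `y₀ = D^{E_χ}(x)` is the unique
`y ∈ conv{x₁,…,x_k}` satisfying `D^E((x|χ)(y)) = y`. -/
theorem generalized_deviation_mean_chi_reduction
    {X : Type*} [AddCommGroup X] [Module ℝ X] [TopologicalSpace X]
    [IsTopologicalAddGroup X] [ContinuousSMul ℝ X] [T2Space X]
    (D : Set X) (hD : D.Nonempty) (hDconv : Convex ℝ D)
    (n k : ℕ) (hk : 0 < k) (hkn : k ≤ n)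
    (χ : Fin k → Fin n) (hχ : Function.Injective χ)
    (E : Fin n → X → X → X →L[ℝ] ℝ)
    (hE0 : ∀ i, ∀ u ∈ D, E i u u = 0)
    (hEcont : ∀ i, ∀ u ∈ D, ∀ h : X, ContinuousOn (fun v => E i u v h) D)
    (hEmono : ∀ i, ∀ u ∈ D, ∀ v ∈ D, ∀ w ∈ D, v ≠ w → (E i u v - E i u w) (v - w) < 0)
    (x : Fin k → X) (hx : ∀ j, x j ∈ D)
    (y₀ : X)
    -- `y₀ = D^{E_χ}(x)`:
    (hy₀mem : y₀ ∈ convexHull ℝ (Set.range x))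
    (hy₀ineq : ∀ j, (∑ j', E (χ j') (x j') y₀) (x j - y₀) ≤ 0) :
    -- `y₀` solves `D^E((x|χ)(y₀)) = y₀` …
    (y₀ ∈ convexHull ℝ (Set.range (Function.extend χ x fun _ => y₀)) ∧
      ∀ i, (∑ i', E i' (Function.extend χ x (fun _ => y₀) i') y₀)
        (Function.extend χ x (fun _ => y₀) i - y₀) ≤ 0) ∧
    -- … and it is the unique such point in `conv{x₁,…,x_k}`:
    ∀ y ∈ convexHull ℝ (Set.range x),
      (y ∈ convexHull ℝ (Set.range (Function.extend χ x fun _ => y)) ∧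
        ∀ i, (∑ i', E i' (Function.extend χ x (fun _ => y) i') y)
          (Function.extend χ x (fun _ => y) i - y) ≤ 0) → y = y₀ :=
  generalized_deviation_mean_chi_reduction_general D hDconv n k χ hχ E hE0 hEmono x hx y₀ hy₀mem
    hy₀ineq
end

section
/- Let X be a real topological vector space, D ⊆ X a convex set, f : D → ℝ, and suppose f' : D → X* assigns to each u ∈ D a continuous linear functional such that for all u, v ∈ D, lim_{t→0⁺} (f(u + t(v−u)) − f(u))/t = f'(u)(v − u). Then: f is convex on D if and only if f' is monotone, i.e., (f'(u) − f'(v))(u − v) ≥ 0 for all u, v ∈ D; and f is strictly convex on D if and only if (f'(u) − f'(v))(u − v) > 0 for all u, v ∈ D with u ≠ v. -/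
/-!
Everything reduces to segments of `D`. On the segment from `u` to `v`, the function
`g t = f (u + t • (v - u))` is continuous on `[0, 1]` and has one-sided derivatives
`d t = f' (u + t • (v - u)) (v - u)`: the Gâteaux quotient at a point `w` of the segment in the
direction of `v` (resp. `u`) is a right (resp. left) difference quotient of `g`, rescaled by a
positive factor. Hence `g` is (strictly) convex iff `d` is (strictly) monotone on `[0, 1]`, and
since `(f' x - f' y) (x - y) = (t - s) * (d t - d s)` for `x = u + t • (v - u)`,
`y = u + s • (v - u)`, this is (strict) monotonicity of `f'` along the segment.
-/

open Filter Topology Set AffineMap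

section OneVariable

theorem HasDerivWithinAt.of_comp_const_add_mul {g : ℝ → ℝ} {s s' : Set ℝ} {t c L : ℝ}
    (hc : c ≠ 0) (h : HasDerivWithinAt (fun r => g (t + c * r)) (c * L) s 0)
    (hs : MapsTo (fun x => (x - t) / c) s' s) : HasDerivWithinAt g L s' t := by
  have hφ : HasDerivWithinAt (fun x => (x - t) / c) (1 / c) s' t :=
    ((hasDerivAt_id t).sub_const t).div_const c |>.hasDerivWithinAt
  have hcomp : ((fun r => g (t + c * r)) ∘ fun x => (x - t) / c) = g := by
    ext x
    simp [mul_div_cancel₀ _ hc]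
  have := h.comp_of_eq t hφ hs (by simp)
  rwa [hcomp, mul_one_div, mul_div_cancel_left₀ _ hc] at this

theorem HasDerivWithinAt.hasDerivAt_of_Iio_of_Ioi {g : ℝ → ℝ} {t L : ℝ}
    (hl : HasDerivWithinAt g L (Iio t) t) (hr : HasDerivWithinAt g L (Ioi t) t) :
    HasDerivAt g L t := by
  rw [hasDerivWithinAt_Ioi_iff_Ici] at hr
  simpa [Iio_union_Ici] using hl.union hr

variable {g d : ℝ → ℝ} {a b : ℝ}

theorem continuousOn_Icc_of_hasDerivWithinAt_Ioi_Iio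
    (hr : ∀ t ∈ Ico a b, HasDerivWithinAt g (d t) (Ioi t) t)
    (hl : ∀ t ∈ Ioc a b, HasDerivWithinAt g (d t) (Iio t) t) : ContinuousOn g (Icc a b) := by
  intro t ht
  rw [← Icc_union_Icc_eq_Icc ht.1 ht.2]
  refine ContinuousWithinAt.union ?_ ?_
  · rcases ht.1.eq_or_lt with rfl | hat
    · simp
    · exact (continuousWithinAt_Iio_iff_Iic.1 (hl t ⟨hat, ht.2⟩).continuousWithinAt).mono
        Icc_subset_Iic_self
  · rcases ht.2.eq_or_lt with rfl | htb
    · simp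
    · exact (continuousWithinAt_Ioi_iff_Ici.1 (hr t ⟨ht.1, htb⟩).continuousWithinAt).mono
        Icc_subset_Ici_self

theorem hasDerivAt_of_hasDerivWithinAt_Ioi_Iio
    (hr : ∀ t ∈ Ico a b, HasDerivWithinAt g (d t) (Ioi t) t)
    (hl : ∀ t ∈ Ioc a b, HasDerivWithinAt g (d t) (Iio t) t) :
    ∀ t ∈ Ioo a b, HasDerivAt g (d t) t :=
  fun t ht => (hl t ⟨ht.1, ht.2.le⟩).hasDerivAt_of_Iio_of_Ioi (hr t ⟨ht.1.le, ht.2⟩)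

theorem convexOn_Icc_iff_monotoneOn_of_hasDerivWithinAt
    (hr : ∀ t ∈ Ico a b, HasDerivWithinAt g (d t) (Ioi t) t)
    (hl : ∀ t ∈ Ioc a b, HasDerivWithinAt g (d t) (Iio t) t) :
    ConvexOn ℝ (Icc a b) g ↔ MonotoneOn d (Icc a b) := by
  constructor
  · intro hg s hs t ht hst
    rcases hst.eq_or_lt with rfl | hst
    · rfl
    exact (hg.le_slope_of_hasDerivWithinAt_Ioi hs ht hst (hr s ⟨hs.1, hst.trans_le ht.2⟩)).trans
      (hg.slope_le_of_hasDerivWithinAt_Iio hs ht hst (hl t ⟨hs.1.trans_lt hst, ht.2⟩))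
  · intro hd
    have hderiv := hasDerivAt_of_hasDerivWithinAt_Ioi_Iio hr hl
    refine MonotoneOn.convexOn_of_deriv (convex_Icc a b)
      (continuousOn_Icc_of_hasDerivWithinAt_Ioi_Iio hr hl) ?_ ?_ <;> rw [interior_Icc]
    · exact fun t ht => (hderiv t ht).differentiableAt.differentiableWithinAt
    · exact (hd.mono Ioo_subset_Icc_self).congr fun t ht => (hderiv t ht).deriv.symm

theorem strictConvexOn_Icc_iff_strictMonoOn_of_hasDerivWithinAt
    (hr : ∀ t ∈ Ico a b, HasDerivWithinAt g (d t) (Ioi t) t)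
    (hl : ∀ t ∈ Ioc a b, HasDerivWithinAt g (d t) (Iio t) t) :
    StrictConvexOn ℝ (Icc a b) g ↔ StrictMonoOn d (Icc a b) := by
  constructor
  · intro hg s hs t ht hst
    exact (hg.lt_slope_of_hasDerivWithinAt_Ioi hs ht hst (hr s ⟨hs.1, hst.trans_le ht.2⟩)).trans
      (hg.slope_lt_of_hasDerivWithinAt_Iio hs ht hst (hl t ⟨hs.1.trans_lt hst, ht.2⟩))
  · intro hd
    have hderiv := hasDerivAt_of_hasDerivWithinAt_Ioi_Iio hr hl
    refine StrictMonoOn.strictConvexOn_of_deriv (convex_Icc a b)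
      (continuousOn_Icc_of_hasDerivWithinAt_Ioi_Iio hr hl) ?_
    rw [interior_Icc]
    exact (hd.mono Ioo_subset_Icc_self).congr fun t ht => (hderiv t ht).deriv.symm

end OneVariable

section Segments

theorem lineMap_sub_lineMap {R M : Type*} [CommRing R] [AddCommGroup M] [Module R M]
    (u v : M) (s t : R) : lineMap u v t - lineMap u v s = (t - s) • (v - u) := by
  simp only [lineMap_apply_module']
  module

variable {𝕜 E β : Type*} [Field 𝕜] [LinearOrder 𝕜] [IsStrictOrderedRing 𝕜]
  [AddCommGroup E] [Module 𝕜 E] [AddCommMonoid β] [PartialOrder β] [SMul 𝕜 β]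
  {D : Set E} {f : E → β}

theorem convexOn_iff_forall_convexOn_comp_lineMap (hD : Convex 𝕜 D) :
    ConvexOn 𝕜 D f ↔ ∀ u ∈ D, ∀ v ∈ D, ConvexOn 𝕜 (Icc (0 : 𝕜) 1) (f ∘ lineMap u v) := by
  refine ⟨fun hf u hu v hv => ?_, fun h => ⟨hD, fun u hu v hv a b ha hb hab => ?_⟩⟩
  · exact (hf.comp_affineMap (lineMap u v)).subset (hD.mapsTo_lineMap hu hv) (convex_Icc 0 1)
  · have := (h u hu v hv).2 (left_mem_Icc.2 zero_le_one) (right_mem_Icc.2 zero_le_one) ha hb hab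
    simpa [lineMap_apply_module, ← eq_sub_of_add_eq hab] using this

theorem strictConvexOn_iff_forall_strictConvexOn_comp_lineMap (hD : Convex 𝕜 D) :
    StrictConvexOn 𝕜 D f ↔
      ∀ u ∈ D, ∀ v ∈ D, u ≠ v → StrictConvexOn 𝕜 (Icc (0 : 𝕜) 1) (f ∘ lineMap u v) := by
  refine ⟨fun hf u hu v hv huv => ⟨convex_Icc 0 1, fun s hs t ht hst a b ha hb hab => ?_⟩,
    fun h => ⟨hD, fun u hu v hv huv a b ha hb hab => ?_⟩⟩
  · simp only [Function.comp_apply, Convex.combo_affine_apply hab]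
    exact hf.2 (hD.mapsTo_lineMap hu hv hs) (hD.mapsTo_lineMap hu hv ht)
      ((lineMap_injective 𝕜 huv).ne hst) ha hb hab
  · have := (h u hu v hv huv).2 (left_mem_Icc.2 zero_le_one) (right_mem_Icc.2 zero_le_one)
      zero_ne_one ha hb hab
    simpa [lineMap_apply_module, ← eq_sub_of_add_eq hab] using this

end Segments

section Gateaux

variable {X : Type*} [AddCommGroup X] [Module ℝ X] {f : X → ℝ} {u v : X}

theorem hasDerivWithinAt_comp_lineMap_Ioi_zero {L : ℝ}
    (h : Tendsto (fun t : ℝ => (f (u + t • (v - u)) - f u) / t) (𝓝[>] 0) (𝓝 L)) :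
    HasDerivWithinAt (f ∘ lineMap u v) L (Ioi (0 : ℝ)) 0 := by
  rw [hasDerivWithinAt_iff_tendsto_slope' self_notMem_Ioi]
  refine h.congr fun t => ?_
  simp [slope_def_field, lineMap_apply_module', add_comm]

variable [TopologicalSpace X] {D : Set X} {f' : X → X →L[ℝ] ℝ}

def HasRelGateauxDerivOn (f : X → ℝ) (f' : X → X →L[ℝ] ℝ) (D : Set X) : Prop :=
  ∀ u ∈ D, ∀ v ∈ D,
    Tendsto (fun t : ℝ => (f (u + t • (v - u)) - f u) / t) (𝓝[>] 0) (𝓝 (f' u (v - u)))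

theorem HasRelGateauxDerivOn.hasDerivWithinAt_comp_lineMap (hf : HasRelGateauxDerivOn f f' D)
    (hD : Convex ℝ D) (hu : u ∈ D) (hv : v ∈ D) {s : Set ℝ} {t τ : ℝ}
    (ht : t ∈ Icc (0 : ℝ) 1) (hτ : τ ∈ Icc (0 : ℝ) 1) (htτ : t ≠ τ)
    (hs : MapsTo (fun x => (x - t) / (τ - t)) s (Ioi 0)) :
    HasDerivWithinAt (f ∘ lineMap u v) (f' (lineMap u v t) (v - u)) s t := by
  have h := hasDerivWithinAt_comp_lineMap_Ioi_zero
    (hf _ (hD.lineMap_mem hu hv ht) _ (hD.lineMap_mem hu hv hτ))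
  refine HasDerivWithinAt.of_comp_const_add_mul (sub_ne_zero.2 htτ.symm) ?_ hs
  rw [lineMap_sub_lineMap, map_smul, smul_eq_mul] at h
  convert h using 2 with r
  simp only [Function.comp_apply, lineMap_apply_module']
  congr 1
  module

theorem HasRelGateauxDerivOn.hasDerivWithinAt_Ioi (hf : HasRelGateauxDerivOn f f' D)
    (hD : Convex ℝ D) (hu : u ∈ D) (hv : v ∈ D) {t : ℝ} (ht : t ∈ Ico (0 : ℝ) 1) :
    HasDerivWithinAt (f ∘ lineMap u v) (f' (lineMap u v t) (v - u)) (Ioi t) t :=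
  hf.hasDerivWithinAt_comp_lineMap hD hu hv (Ico_subset_Icc_self ht)
    (right_mem_Icc.2 zero_le_one) ht.2.ne fun _ hx => div_pos (sub_pos.2 hx) (sub_pos.2 ht.2)

theorem HasRelGateauxDerivOn.hasDerivWithinAt_Iio (hf : HasRelGateauxDerivOn f f' D)
    (hD : Convex ℝ D) (hu : u ∈ D) (hv : v ∈ D) {t : ℝ} (ht : t ∈ Ioc (0 : ℝ) 1) :
    HasDerivWithinAt (f ∘ lineMap u v) (f' (lineMap u v t) (v - u)) (Iio t) t :=
  hf.hasDerivWithinAt_comp_lineMap hD hu hv (Ioc_subset_Icc_self ht)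
    (left_mem_Icc.2 zero_le_one) ht.1.ne' fun _ hx =>
      div_pos_of_neg_of_neg (sub_neg.2 hx) (sub_neg.2 ht.1)

theorem HasRelGateauxDerivOn.convexOn_comp_lineMap_iff (hf : HasRelGateauxDerivOn f f' D)
    (hD : Convex ℝ D) (hu : u ∈ D) (hv : v ∈ D) :
    ConvexOn ℝ (Icc (0 : ℝ) 1) (f ∘ lineMap u v) ↔
      MonotoneOn (fun t : ℝ => f' (lineMap u v t) (v - u)) (Icc 0 1) :=
  convexOn_Icc_iff_monotoneOn_of_hasDerivWithinAt (fun _ => hf.hasDerivWithinAt_Ioi hD hu hv)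
    (fun _ => hf.hasDerivWithinAt_Iio hD hu hv)

theorem HasRelGateauxDerivOn.strictConvexOn_comp_lineMap_iff (hf : HasRelGateauxDerivOn f f' D)
    (hD : Convex ℝ D) (hu : u ∈ D) (hv : v ∈ D) :
    StrictConvexOn ℝ (Icc (0 : ℝ) 1) (f ∘ lineMap u v) ↔
      StrictMonoOn (fun t : ℝ => f' (lineMap u v t) (v - u)) (Icc 0 1) :=
  strictConvexOn_Icc_iff_strictMonoOn_of_hasDerivWithinAt
    (fun _ => hf.hasDerivWithinAt_Ioi hD hu hv) (fun _ => hf.hasDerivWithinAt_Iio hD hu hv)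

theorem sub_apply_lineMap_sub_lineMap (f' : X → X →L[ℝ] ℝ) (u v : X) (s t : ℝ) :
    (f' (lineMap u v t) - f' (lineMap u v s)) (lineMap u v t - lineMap u v s) =
      (t - s) * (f' (lineMap u v t) (v - u) - f' (lineMap u v s) (v - u)) := by
  rw [lineMap_sub_lineMap, map_smul, smul_eq_mul, sub_apply]

theorem forall_monotoneOn_apply_lineMap_iff (hD : Convex ℝ D) :
    (∀ u ∈ D, ∀ v ∈ D, MonotoneOn (fun t : ℝ => f' (lineMap u v t) (v - u)) (Icc 0 1)) ↔
      ∀ u ∈ D, ∀ v ∈ D, 0 ≤ (f' u - f' v) (u - v) := by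
  refine ⟨fun h u hu v hv => ?_, fun h u hu v hv s hs t ht hst => ?_⟩
  · have := h v hv u hu (left_mem_Icc.2 zero_le_one) (right_mem_Icc.2 zero_le_one) zero_le_one
    simpa using this
  · rcases hst.eq_or_lt with rfl | hst
    · rfl
    have := h _ (hD.lineMap_mem hu hv ht) _ (hD.lineMap_mem hu hv hs)
    rw [sub_apply_lineMap_sub_lineMap, mul_nonneg_iff_of_pos_left (sub_pos.2 hst)] at this
    exact sub_nonneg.1 this

theorem forall_strictMonoOn_apply_lineMap_iff (hD : Convex ℝ D) :
    (∀ u ∈ D, ∀ v ∈ D, u ≠ v →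
        StrictMonoOn (fun t : ℝ => f' (lineMap u v t) (v - u)) (Icc 0 1)) ↔
      ∀ u ∈ D, ∀ v ∈ D, u ≠ v → 0 < (f' u - f' v) (u - v) := by
  refine ⟨fun h u hu v hv huv => ?_, fun h u hu v hv huv s hs t ht hst => ?_⟩
  · have := h v hv u hu huv.symm (left_mem_Icc.2 zero_le_one) (right_mem_Icc.2 zero_le_one)
      zero_lt_one
    simpa using this
  · have := h _ (hD.lineMap_mem hu hv ht) _ (hD.lineMap_mem hu hv hs)
      ((lineMap_injective ℝ huv).ne hst.ne')
    rw [sub_apply_lineMap_sub_lineMap, mul_pos_iff_of_pos_left (sub_pos.2 hst)] at this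
    exact sub_pos.1 this

end Gateaux

theorem gateaux_convexity_monotone_characterization_general
    {X : Type*} [AddCommGroup X] [Module ℝ X] [TopologicalSpace X]
    (D : Set X) (hDconv : Convex ℝ D)
    (f : X → ℝ) (f' : X → X →L[ℝ] ℝ)
    (hf' : ∀ u ∈ D, ∀ v ∈ D,
      Tendsto (fun t : ℝ => (f (u + t • (v - u)) - f u) / t) (𝓝[>] 0)
        (𝓝 (f' u (v - u)))) :
    (ConvexOn ℝ D f ↔ ∀ u ∈ D, ∀ v ∈ D, 0 ≤ (f' u - f' v) (u - v)) ∧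
    (StrictConvexOn ℝ D f ↔ ∀ u ∈ D, ∀ v ∈ D, u ≠ v → 0 < (f' u - f' v) (u - v)) := by
  have hf : HasRelGateauxDerivOn f f' D := hf'
  constructor
  · rw [convexOn_iff_forall_convexOn_comp_lineMap hDconv,
      ← forall_monotoneOn_apply_lineMap_iff hDconv]
    exact forall₂_congr fun u hu => forall₂_congr fun v hv =>
      hf.convexOn_comp_lineMap_iff hDconv hu hv
  · rw [strictConvexOn_iff_forall_strictConvexOn_comp_lineMap hDconv,
      ← forall_strictMonoOn_apply_lineMap_iff hDconv]
    exact forall₂_congr fun u hu => forall₂_congr fun v hv => imp_congr_right fun _ =>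
      hf.strictConvexOn_comp_lineMap_iff hDconv hu hv

/-- A relatively Gâteaux differentiable function on a convex set is (strictly)
convex iff its Gâteaux derivative is (strictly) monotone. -/
theorem gateaux_convexity_monotone_characterization
    {X : Type*} [AddCommGroup X] [Module ℝ X] [TopologicalSpace X]
    [IsTopologicalAddGroup X] [ContinuousSMul ℝ X]
    (D : Set X) (hDconv : Convex ℝ D)
    (f : X → ℝ) (f' : X → X →L[ℝ] ℝ)
    (hf' : ∀ u ∈ D, ∀ v ∈ D,
      Tendsto (fun t : ℝ => (f (u + t • (v - u)) - f u) / t) (𝓝[>] 0)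
        (𝓝 (f' u (v - u)))) :
    (ConvexOn ℝ D f ↔ ∀ u ∈ D, ∀ v ∈ D, 0 ≤ (f' u - f' v) (u - v)) ∧
    (StrictConvexOn ℝ D f ↔ ∀ u ∈ D, ∀ v ∈ D, u ≠ v → 0 < (f' u - f' v) (u - v)) :=
  gateaux_convexity_monotone_characterization_general D hDconv f f' hf'
end

section
/- Let X be a real topological vector space, D ⊆ X a convex set, and F : D × D → ℝ a function satisfying property (F) with derivative family F'_u. Then the map E_F : D × D → X* defined by E_F(u,v) = −F'_u(v) is a generalized deviation function on D; that is, E_F(u,u) = 0 for all u ∈ D, and (E_F(u,v) − E_F(u,w))(v − w) < 0 for all u ∈ D and v, w ∈ D with v ≠ w. -/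
/-!
Restricted to the segment `t ↦ v + t • (w - v)`, a strictly convex function is a strictly
convex function of one real variable, whose right derivative at `0` lies strictly below the
secant slope over `[0, 1]`. Hence `F'_u(v)(w - v) < F_u(w) - F_u(v)`; adding this to the same
inequality with `v` and `w` exchanged gives the strict monotonicity of `v ↦ F'_u(v)`.
-/

open Filter Topology Set

theorem StrictConvexOn.comp_affineMap_of_injective {𝕜 E F β : Type*} [Field 𝕜]
    [LinearOrder 𝕜] [IsStrictOrderedRing 𝕜] [AddCommGroup E] [Module 𝕜 E] [AddCommGroup F]
    [Module 𝕜 F] [AddCommMonoid β] [PartialOrder β] [SMul 𝕜 β] {f : F → β} {s : Set F}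
    (hf : StrictConvexOn 𝕜 s f) {g : E →ᵃ[𝕜] F} (hg : Function.Injective g) :
    StrictConvexOn 𝕜 (g ⁻¹' s) (f ∘ g) :=
  ⟨hf.1.affine_preimage _, fun x hx y hy hxy a b ha hb hab => by
    simpa only [Function.comp_apply, Convex.combo_affine_apply hab] using
      hf.2 hx hy (hg.ne hxy) ha hb hab⟩

section Gateaux

variable {X : Type*} [AddCommGroup X] [Module ℝ X] {D : Set X} {f : X → ℝ} {v w : X}

theorem StrictConvexOn.lt_sub_of_tendsto_slope (hf : StrictConvexOn ℝ D f) (hv : v ∈ D)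
    (hw : w ∈ D) (hvw : v ≠ w) {L : ℝ}
    (hL : Tendsto (fun t : ℝ => (f (v + t • (w - v)) - f v) / t) (𝓝[>] 0) (𝓝 L)) :
    L < f w - f v := by
  set g := f ∘ AffineMap.lineMap (k := ℝ) v w
  have hg : StrictConvexOn ℝ (AffineMap.lineMap v w ⁻¹' D) g :=
    hf.comp_affineMap_of_injective (AffineMap.lineMap_injective ℝ hvw)
  have hg_apply (t : ℝ) : g t = f (v + t • (w - v)) := by
    simp only [g, Function.comp_apply, AffineMap.lineMap_apply_module', add_comm]
  have hderiv : HasDerivWithinAt g L (Ioi 0) 0 := by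
    have hslope : slope g 0 = fun t => (f (v + t • (w - v)) - f v) / t := by
      ext t
      simp only [slope_def_field, sub_zero, hg_apply, zero_smul, add_zero]
    rwa [hasDerivWithinAt_iff_tendsto_slope' self_notMem_Ioi, hslope]
  have hsecant := hg.lt_slope_of_hasDerivWithinAt_Ioi (by simpa using hv) (by simpa using hw)
    zero_lt_one hderiv
  simpa only [slope_def_field, sub_zero, div_one, hg_apply, one_smul, zero_smul, add_zero,
    add_sub_cancel] using hsecant

theorem StrictConvexOn.apply_sub_pos_of_tendsto_slope (hf : StrictConvexOn ℝ D f)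
    {f' : X → X →ₗ[ℝ] ℝ}
    (hf' : ∀ v ∈ D, ∀ w ∈ D,
      Tendsto (fun t : ℝ => (f (v + t • (w - v)) - f v) / t) (𝓝[>] 0) (𝓝 (f' v (w - v))))
    (hv : v ∈ D) (hw : w ∈ D) (hvw : v ≠ w) :
    0 < (f' v - f' w) (v - w) := by
  have hv_secant := hf.lt_sub_of_tendsto_slope hv hw hvw (hf' v hv w hw)
  have hw_secant := hf.lt_sub_of_tendsto_slope hw hv hvw.symm (hf' w hw v hv)
  rw [← neg_sub v w, map_neg] at hv_secant
  simp only [LinearMap.sub_apply]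
  linarith

end Gateaux

theorem propertyF_gives_generalized_deviation_general
    {X : Type*} [AddCommGroup X] [Module ℝ X] [TopologicalSpace X]
    (D : Set X)
    (F : X → X → ℝ) (F' : X → X → X →L[ℝ] ℝ)
    (hFconv : ∀ u ∈ D, StrictConvexOn ℝ D (F u))
    (hFgateaux : ∀ u ∈ D, ∀ v ∈ D, ∀ w ∈ D,
      Tendsto (fun t : ℝ => (F u (v + t • (w - v)) - F u v) / t) (𝓝[>] 0)
        (𝓝 (F' u v (w - v))))
    (hF'0 : ∀ u ∈ D, F' u u = 0) :
    (∀ u ∈ D, -F' u u = (0 : X →L[ℝ] ℝ)) ∧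
    (∀ u ∈ D, ∀ v ∈ D, ∀ w ∈ D, v ≠ w → (-F' u v - -F' u w) (v - w) < 0) := by
  refine ⟨fun u hu => by rw [hF'0 u hu, neg_zero], fun u hu v hv w hw hvw => ?_⟩
  have hmono := (hFconv u hu).apply_sub_pos_of_tendsto_slope
    (f' := fun v => (F' u v : X →ₗ[ℝ] ℝ)) (hFgateaux u hu) hv hw hvw
  rw [neg_sub_neg, ← neg_sub, neg_apply, neg_lt_zero]
  exact hmono

/-- If `F : D × D → ℝ` satisfies property (F) with derivative family `F'_u`,
then `E_F(u,v) := −F'_u(v)` is a generalized deviation function on `D`. -/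
theorem propertyF_gives_generalized_deviation
    {X : Type*} [AddCommGroup X] [Module ℝ X] [TopologicalSpace X]
    [IsTopologicalAddGroup X] [ContinuousSMul ℝ X]
    (D : Set X) (hDconv : Convex ℝ D)
    (F : X → X → ℝ) (F' : X → X → X →L[ℝ] ℝ)
    (hFconv : ∀ u ∈ D, StrictConvexOn ℝ D (F u))
    (hFgateaux : ∀ u ∈ D, ∀ v ∈ D, ∀ w ∈ D,
      Tendsto (fun t : ℝ => (F u (v + t • (w - v)) - F u v) / t) (𝓝[>] 0)
        (𝓝 (F' u v (w - v))))
    (hF'0 : ∀ u ∈ D, F' u u = 0) :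
    (∀ u ∈ D, -F' u u = (0 : X →L[ℝ] ℝ)) ∧
    (∀ u ∈ D, ∀ v ∈ D, ∀ w ∈ D, v ≠ w → (-F' u v - -F' u w) (v - w) < 0) :=
  propertyF_gives_generalized_deviation_general D F F' hFconv hFgateaux hF'0
end

section
/- Let X be a real Hausdorff topological vector space, D ⊆ X a convex set, n ≥ 1, and F₁,…,Fₙ : D × D → ℝ functions satisfying property (F), with E_{Fᵢ}(u,v) := −(Fᵢ)'_u(v). Then for every x ∈ Dⁿ and every y ∈ conv{x₁,…,xₙ}, the inequalities (E_{F₁}(x₁,y) + ⋯ + E_{Fₙ}(xₙ,y))(xᵢ − y) ≤ 0 for all i ∈ {1,…,n} hold if and only if y minimizes the function 𝔽(v) := F₁(x₁,v) + ⋯ + Fₙ(xₙ,v) over conv{x₁,…,xₙ}; moreover, there is at most one such y (by strict convexity of 𝔽). -/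
/-! Both conditions are the first-order optimality condition for the convex function
`𝔽 = ∑ⱼ Fⱼ(xⱼ, ·)` on `conv{x₁,…,xₙ}`. Convexity makes the difference quotients of `𝔽` along a
segment at most `𝔽(v) - 𝔽(y)`, so a nonnegative Gâteaux derivative `𝔽'_y(v - y)` forces
`𝔽(y) ≤ 𝔽(v)`; conversely, at a minimizer these quotients are nonnegative. Since `𝔽'_y` is linear,
it is nonnegative on `conv{x₁,…,xₙ} - y` as soon as it is on the `xᵢ - y`. Strict convexity of `𝔽`
gives uniqueness. -/

open Filter Topology

theorem StrictConvexOn.finset_sum {𝕜 E β ι : Type*} [Semiring 𝕜] [PartialOrder 𝕜]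
    [AddCommMonoid E] [Module 𝕜 E] [AddCommMonoid β] [PartialOrder β]
    [IsOrderedCancelAddMonoid β] [Module 𝕜 β] {s : Set E} {t : Finset ι}
    {f : ι → E → β} (ht : t.Nonempty) (hf : ∀ i ∈ t, StrictConvexOn 𝕜 s (f i)) :
    StrictConvexOn 𝕜 s (fun v => ∑ i ∈ t, f i v) := by
  induction ht using Finset.Nonempty.cons_induction with
  | singleton i => simpa using hf i (Finset.mem_singleton_self i)
  | cons i t _ _ ih =>
    simp only [Finset.sum_cons]
    exact (hf i (Finset.mem_cons_self i t)).add_convexOn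
      (ih fun j hj => hf j (Finset.mem_cons_of_mem hj)).convexOn

section DirectionalDerivative

variable {E : Type*} [AddCommGroup E] [Module ℝ E] {s : Set E} {f : E → ℝ} {y v : E} {d : ℝ}

theorem ConvexOn.slope_le_sub (hf : ConvexOn ℝ s f) (hy : y ∈ s) (hv : v ∈ s) {t : ℝ}
    (ht : t ∈ Set.Ioc 0 1) : (f (y + t • (v - y)) - f y) / t ≤ f v - f y := by
  have hpt : y + t • (v - y) = (1 - t) • y + t • v := by
    rw [smul_sub, sub_smul, one_smul]; abel
  have hconv := hf.2 hy hv (sub_nonneg.2 ht.2) ht.1.le (sub_add_cancel 1 t)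
  rw [← hpt, smul_eq_mul, smul_eq_mul] at hconv
  rw [div_le_iff₀ ht.1]
  linarith

theorem ConvexOn.le_sub_of_tendsto_slope (hf : ConvexOn ℝ s f) (hy : y ∈ s) (hv : v ∈ s)
    (hd : Tendsto (fun t : ℝ => (f (y + t • (v - y)) - f y) / t) (𝓝[>] 0) (𝓝 d)) :
    d ≤ f v - f y :=
  le_of_tendsto hd <| eventually_of_mem (Ioc_mem_nhdsGT zero_lt_one) fun _ ht =>
    hf.slope_le_sub hy hv ht

theorem IsMinOn.nonneg_of_tendsto_slope (hs : Convex ℝ s) (hmin : IsMinOn f s y) (hy : y ∈ s)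
    (hv : v ∈ s)
    (hd : Tendsto (fun t : ℝ => (f (y + t • (v - y)) - f y) / t) (𝓝[>] 0) (𝓝 d)) :
    0 ≤ d := by
  refine ge_of_tendsto hd <| eventually_of_mem (Ioc_mem_nhdsGT zero_lt_one) fun t ht => ?_
  have hmem : y + t • (v - y) ∈ s := hs.add_smul_sub_mem hy hv ⟨ht.1.le, ht.2⟩
  exact div_nonneg (sub_nonneg.2 (hmin hmem)) ht.1.le

theorem ConvexOn.isMinOn_iff_forall_nonneg (hf : ConvexOn ℝ s f) (hs : Convex ℝ s) (hy : y ∈ s)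
    {f' : E → ℝ}
    (hf' : ∀ v ∈ s, Tendsto (fun t : ℝ => (f (y + t • (v - y)) - f y) / t) (𝓝[>] 0)
      (𝓝 (f' v))) :
    IsMinOn f s y ↔ ∀ v ∈ s, 0 ≤ f' v :=
  ⟨fun hmin v hv => hmin.nonneg_of_tendsto_slope hs hy hv (hf' v hv), fun h v hv =>
    sub_nonneg.1 <| (h v hv).trans (hf.le_sub_of_tendsto_slope hy hv (hf' v hv))⟩

end DirectionalDerivative

theorem forall_mem_convexHull_map_sub_nonneg_iff {E M : Type*} [AddCommGroup E] [Module ℝ E]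
    [FunLike M E ℝ] [LinearMapClass M ℝ E ℝ] (L : M) (y : E) (t : Set E) :
    (∀ v ∈ convexHull ℝ t, 0 ≤ L (v - y)) ↔ ∀ v ∈ t, 0 ≤ L (v - y) := by
  have hconv : Convex ℝ {v | 0 ≤ L (v - y)} := by
    simp_rw [map_sub, sub_nonneg]
    exact convex_halfSpace_ge (LinearMap.isLinear (L : E →ₗ[ℝ] ℝ)) _
  exact hconv.convexHull_subset_iff

theorem generalized_deviation_mean_as_minimizer_general
    {X : Type*} [AddCommGroup X] [Module ℝ X] [TopologicalSpace X]
    (D : Set X) (hDconv : Convex ℝ D)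
    (n : ℕ)
    (F : Fin n → X → X → ℝ) (F' : Fin n → X → X → X →L[ℝ] ℝ)
    (hFconv : ∀ i, ∀ u ∈ D, StrictConvexOn ℝ D (F i u))
    (hFgateaux : ∀ i, ∀ u ∈ D, ∀ v ∈ D, ∀ w ∈ D,
      Tendsto (fun t : ℝ => (F i u (v + t • (w - v)) - F i u v) / t) (𝓝[>] 0)
        (𝓝 (F' i u v (w - v))))
    (x : Fin n → X) (hx : ∀ i, x i ∈ D) :
    (∀ y ∈ convexHull ℝ (Set.range x),
      ((∀ i, (∑ j, -F' j (x j) y) (x i - y) ≤ 0) ↔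
        ∀ v ∈ convexHull ℝ (Set.range x), ∑ j, F j (x j) y ≤ ∑ j, F j (x j) v)) ∧
    (∀ y₁ ∈ convexHull ℝ (Set.range x), ∀ y₂ ∈ convexHull ℝ (Set.range x),
      (∀ i, (∑ j, -F' j (x j) y₁) (x i - y₁) ≤ 0) →
      (∀ i, (∑ j, -F' j (x j) y₂) (x i - y₂) ≤ 0) → y₁ = y₂) := by
  set C := convexHull ℝ (Set.range x)
  set G : X → ℝ := fun v => ∑ j, F j (x j) v
  set L : X → X →L[ℝ] ℝ := fun y => ∑ j, F' j (x j) y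
  have hCD : C ⊆ D := convexHull_min (Set.range_subset_iff.2 hx) hDconv
  have hGconv : ∀ y ∈ C, StrictConvexOn ℝ C G := fun y hy =>
    (StrictConvexOn.finset_sum
      (Finset.univ_nonempty_iff.2 (Set.range_nonempty_iff_nonempty.1
        (convexHull_nonempty_iff.1 ⟨y, hy⟩)))
      fun j _ => hFconv j (x j) (hx j)).subset hCD (convex_convexHull ℝ _)
  have hG' : ∀ y ∈ D, ∀ v ∈ D, Tendsto (fun t : ℝ => (G (y + t • (v - y)) - G y) / t)
      (𝓝[>] 0) (𝓝 (L y (v - y))) := fun y hy v hv => by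
    simpa only [G, L, _root_.sum_apply, ← Finset.sum_sub_distrib, Finset.sum_div]
      using tendsto_finsetSum Finset.univ fun j _ => hFgateaux j (x j) (hx j) y hy v hv
  have hmin : ∀ y ∈ C, (∀ i, (∑ j, -F' j (x j) y) (x i - y) ≤ 0) ↔ IsMinOn G C y :=
    fun y hy => by
      rw [(hGconv y hy).convexOn.isMinOn_iff_forall_nonneg (convex_convexHull ℝ _) hy
        fun v hv => hG' y (hCD hy) v (hCD hv),
        forall_mem_convexHull_map_sub_nonneg_iff (L y) y, Set.forall_mem_range]
      simp [L, Finset.sum_neg_distrib]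
  exact ⟨fun y hy => (hmin y hy).trans isMinOn_iff, fun y₁ hy₁ y₂ hy₂ h₁ h₂ =>
    (hGconv y₁ hy₁).eq_of_isMinOn ((hmin y₁ hy₁).1 h₁) ((hmin y₂ hy₂).1 h₂) hy₁ hy₂⟩

/-- For `F₁,…,Fₙ` with property (F) and `E_{Fᵢ}(u,v) := −(Fᵢ)'_u(v)`, a point
`y ∈ conv{x₁,…,xₙ}` satisfies the generalized deviation mean inequalities iff it minimizes
`v ↦ F₁(x₁,v) + ⋯ + Fₙ(xₙ,v)` over `conv{x₁,…,xₙ}`; moreover such a point is unique. -/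
theorem generalized_deviation_mean_as_minimizer
    {X : Type*} [AddCommGroup X] [Module ℝ X] [TopologicalSpace X]
    [IsTopologicalAddGroup X] [ContinuousSMul ℝ X] [T2Space X]
    (D : Set X) (hDconv : Convex ℝ D)
    (n : ℕ) (hn : 0 < n)
    (F : Fin n → X → X → ℝ) (F' : Fin n → X → X → X →L[ℝ] ℝ)
    (hFconv : ∀ i, ∀ u ∈ D, StrictConvexOn ℝ D (F i u))
    (hFgateaux : ∀ i, ∀ u ∈ D, ∀ v ∈ D, ∀ w ∈ D,
      Tendsto (fun t : ℝ => (F i u (v + t • (w - v)) - F i u v) / t) (𝓝[>] 0)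
        (𝓝 (F' i u v (w - v))))
    (hF'0 : ∀ i, ∀ u ∈ D, F' i u u = 0)
    (x : Fin n → X) (hx : ∀ i, x i ∈ D) :
    (∀ y ∈ convexHull ℝ (Set.range x),
      ((∀ i, (∑ j, -F' j (x j) y) (x i - y) ≤ 0) ↔
        ∀ v ∈ convexHull ℝ (Set.range x), ∑ j, F j (x j) y ≤ ∑ j, F j (x j) v)) ∧
    (∀ y₁ ∈ convexHull ℝ (Set.range x), ∀ y₂ ∈ convexHull ℝ (Set.range x),
      (∀ i, (∑ j, -F' j (x j) y₁) (x i - y₁) ≤ 0) →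
      (∀ i, (∑ j, -F' j (x j) y₂) (x i - y₂) ≤ 0) → y₁ = y₂) :=
  generalized_deviation_mean_as_minimizer_general D hDconv n F F' hFconv hFgateaux x hx
end

section
/- Let (X, ‖·‖) be a real normed space whose unit ball is strictly convex and whose norm p(x) = ‖x‖ is Gâteaux differentiable at every x ≠ 0, i.e., for every x ≠ 0 there is a continuous linear functional p'(x) with lim_{t→0⁺} (‖x + th‖ − ‖x‖)/t = p'(x)(h) for all h ∈ X. Let D ⊆ X be a convex set and ω : D → ℝ positive-valued. Then F(u,v) := ω(u)‖v − u‖² satisfies property (F): for each u ∈ D, the function F_u = F(u,·) is strictly convex on D, relatively Gâteaux differentiable on D with F'_u(v) = 2ω(u)‖v − u‖ p'(v − u) for v ≠ u, and F'_u(u) = 0. -/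
open Filter Topology Set

/-! The norm square `‖v - u‖²` is strictly convex because the norm is convex and `r ↦ r²` is
strictly convex on `[0, ∞)`; between points of equal norm, where the latter gives nothing,
strict convexity of the unit ball takes over. Its one-sided directional derivative is
`2‖x‖ p'(x)` by the chain rule for `r ↦ r²` at `x ≠ 0`, and vanishes at `x = 0` since there
the norm has the finite one-sided derivative `‖h‖` in direction `h`. -/

section StrictConvexity

variable {X : Type*} [NormedAddCommGroup X] [NormedSpace ℝ X]

theorem StrictConvexSpace.of_forall_norm_combo_lt_one
    (h : ∀ x y : X, ‖x‖ = 1 → ‖y‖ = 1 → x ≠ y →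
      ∀ t ∈ Ioo (0 : ℝ) 1, ‖t • x + (1 - t) • y‖ < 1) :
    StrictConvexSpace ℝ X :=
  .of_norm_combo_lt_one fun x y hx hy hne =>
    ⟨1 / 2, 1 - 1 / 2, by ring, h x y hx hy hne _ ⟨by norm_num, by norm_num⟩⟩

theorem StrictConvexOn.const_mul {E : Type*} [AddCommMonoid E] [Module ℝ E] {s : Set E}
    {f : E → ℝ} {c : ℝ} (hc : 0 < c) (hf : StrictConvexOn ℝ s f) :
    StrictConvexOn ℝ s fun x => c * f x := by
  refine ⟨hf.1, fun x hx y hy hxy a b ha hb hab => ?_⟩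
  have := mul_lt_mul_of_pos_left (hf.2 hx hy hxy ha hb hab) hc
  simp only [smul_eq_mul] at this ⊢
  linarith

theorem strictConvexOn_univ_norm_sq [StrictConvexSpace ℝ X] :
    StrictConvexOn ℝ univ fun x : X => ‖x‖ ^ 2 := by
  refine ⟨convex_univ, fun x _ y _ hxy a b ha hb hab => ?_⟩
  simp only [smul_eq_mul]
  rcases eq_or_ne ‖x‖ ‖y‖ with hnorm | hnorm
  · have hlt : ‖a • x + b • y‖ < ‖x‖ := norm_combo_lt_of_ne le_rfl hnorm.ge hxy ha hb hab
    rw [← hnorm, ← add_mul, hab, one_mul]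
    exact pow_lt_pow_left₀ hlt (norm_nonneg _) two_ne_zero
  · calc ‖a • x + b • y‖ ^ 2 ≤ (a * ‖x‖ + b * ‖y‖) ^ 2 := by
          gcongr
          simpa using convexOn_univ_norm.2 (mem_univ x) (mem_univ y) ha.le hb.le hab
      _ < a * ‖x‖ ^ 2 + b * ‖y‖ ^ 2 := by
          simpa using (strictConvexOn_pow le_rfl).2 (norm_nonneg x) (norm_nonneg y) hnorm
            ha hb hab

theorem strictConvexOn_norm_sub_sq [StrictConvexSpace ℝ X] {s : Set X} (hs : Convex ℝ s)
    (u : X) : StrictConvexOn ℝ s fun v => ‖v - u‖ ^ 2 := by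
  have := strictConvexOn_univ_norm_sq.translate_left (-u)
  simp only [preimage_univ, Function.comp_def, ← sub_eq_add_neg] at this
  exact this.subset (subset_univ s) hs

end StrictConvexity

section DirectionalDerivative

variable {X : Type*} [NormedAddCommGroup X] [NormedSpace ℝ X] {f : X → ℝ} {L : ℝ} {x h : X}

/-- The one-sided directional (Gâteaux) derivative in which `p'` and property (F) are phrased. -/
def HasRightDirDerivAt (f : X → ℝ) (L : ℝ) (x h : X) : Prop :=
  Tendsto (fun t : ℝ => (f (x + t • h) - f x) / t) (𝓝[>] 0) (𝓝 L)

theorem hasRightDirDerivAt_iff_hasDerivWithinAt :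
    HasRightDirDerivAt f L x h ↔ HasDerivWithinAt (fun t : ℝ => f (x + t • h)) L (Ioi 0) 0 := by
  rw [hasDerivWithinAt_iff_tendsto_slope' self_notMem_Ioi]
  simp only [HasRightDirDerivAt, slope_fun_def_field, zero_smul, add_zero, sub_zero]

theorem HasRightDirDerivAt.const_mul (c : ℝ) (hf : HasRightDirDerivAt f L x h) :
    HasRightDirDerivAt (fun y => c * f y) (c * L) x h := by
  rw [hasRightDirDerivAt_iff_hasDerivWithinAt] at hf ⊢
  exact hf.const_mul c

theorem HasRightDirDerivAt.sq (hf : HasRightDirDerivAt f L x h) :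
    HasRightDirDerivAt (fun y => f y ^ 2) (2 * f x * L) x h := by
  rw [hasRightDirDerivAt_iff_hasDerivWithinAt] at hf ⊢
  simpa using hf.fun_pow 2

theorem HasRightDirDerivAt.comp_sub_const (u : X) (hf : HasRightDirDerivAt f L (x - u) h) :
    HasRightDirDerivAt (fun y => f (y - u)) L x h := by
  simpa only [HasRightDirDerivAt, sub_add_eq_add_sub] using hf

theorem hasRightDirDerivAt_norm_zero (h : X) : HasRightDirDerivAt (‖·‖) ‖h‖ 0 h := by
  refine tendsto_const_nhds.congr' (eventually_nhdsWithin_of_forall fun t (ht : 0 < t) => ?_)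
  dsimp only
  rw [zero_add, norm_zero, sub_zero, norm_smul, Real.norm_of_nonneg ht.le,
    mul_div_cancel_left₀ _ ht.ne']

theorem hasRightDirDerivAt_norm_sq (hd : x ≠ 0 → HasRightDirDerivAt (‖·‖) L x h) :
    HasRightDirDerivAt (fun y => ‖y‖ ^ 2) (2 * ‖x‖ * L) x h := by
  rcases eq_or_ne x 0 with rfl | hx
  · simpa using (hasRightDirDerivAt_norm_zero h).sq
  · exact (hd hx).sq

end DirectionalDerivative

/-- In a normed space with strictly convex unit ball and Gâteaux
differentiable norm, `F(u,v) := ω(u)‖v − u‖²` satisfies property (F), with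
`F'_u(v) = 2ω(u)‖v − u‖ p'(v − u)` for `v ≠ u` and `F'_u(u) = 0`. -/
theorem weighted_norm_square_satisfies_propertyF
    {X : Type*} [NormedAddCommGroup X] [NormedSpace ℝ X]
    (hball : ∀ x y : X, ‖x‖ = 1 → ‖y‖ = 1 → x ≠ y →
      ∀ t ∈ Set.Ioo (0 : ℝ) 1, ‖t • x + (1 - t) • y‖ < 1)
    (p' : X → X →L[ℝ] ℝ)
    (hp' : ∀ x : X, x ≠ 0 → ∀ h : X,
      Tendsto (fun t : ℝ => (‖x + t • h‖ - ‖x‖) / t) (𝓝[>] 0) (𝓝 (p' x h)))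
    (D : Set X) (hDconv : Convex ℝ D)
    (ω : X → ℝ) (hω : ∀ u ∈ D, 0 < ω u)
    (u : X) (hu : u ∈ D) :
    StrictConvexOn ℝ D (fun v => ω u * ‖v - u‖ ^ 2) ∧
    ∃ F' : X → X →L[ℝ] ℝ,
      (∀ v ∈ D, ∀ w ∈ D,
        Tendsto (fun t : ℝ =>
            (ω u * ‖v + t • (w - v) - u‖ ^ 2 - ω u * ‖v - u‖ ^ 2) / t)
          (𝓝[>] 0) (𝓝 (F' v (w - v)))) ∧
      (∀ v ∈ D, v ≠ u → F' v = (2 * ω u * ‖v - u‖) • p' (v - u)) ∧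
      F' u = 0 := by
  have := StrictConvexSpace.of_forall_norm_combo_lt_one hball
  refine ⟨(strictConvexOn_norm_sub_sq hDconv u).const_mul (hω u hu),
    fun v => (2 * ω u * ‖v - u‖) • p' (v - u), fun v _ w _ => ?_, fun _ _ _ => rfl, by simp⟩
  have hF' : ((2 * ω u * ‖v - u‖) • p' (v - u)) (w - v) =
      ω u * (2 * ‖v - u‖ * p' (v - u) (w - v)) := by
    rw [smul_apply, smul_eq_mul]
    ring
  rw [hF']
  exact ((hasRightDirDerivAt_norm_sq fun hx => hp' _ hx _).comp_sub_const u).const_mul (ω u)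
end

section
/- Let I ⊆ ℝ be an interval, n a natural number, k ∈ {1,…,n}, and χ : {1,…,k} → {1,…,n} an injective map. Let G₁,…,Gₙ and E₁,…,Eₙ be deviation functions on I. If the comparison D^G(x₁,…,xₙ) ≤ D^E(x₁,…,xₙ) holds for all x₁,…,xₙ ∈ I, then also D^{G_χ}(x₁,…,x_k) ≤ D^{E_χ}(x₁,…,x_k) holds for all x₁,…,x_k ∈ I, where G_χ = (G_{χ(1)},…,G_{χ(k)}) and E_χ = (E_{χ(1)},…,E_{χ(k)}). -/
/-- If the comparison `D^G ≤ D^E` holds for the `n`-variable deviation means,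
then the comparison `D^{G_χ} ≤ D^{E_χ}` holds for the reduced `k`-variable deviation means.
(Deviation means are referred to via their defining characterization.) -/
theorem deviation_mean_comparison_is_chi_reducible
    (I : Set ℝ) (hI : Convex ℝ I)
    (n k : ℕ) (hk : 0 < k) (hkn : k ≤ n)
    (χ : Fin k → Fin n) (hχ : Function.Injective χ)
    (G E : Fin n → ℝ → ℝ → ℝ)
    (hG0 : ∀ i, ∀ u ∈ I, G i u u = 0)
    (hGcont : ∀ i, ∀ u ∈ I, ContinuousOn (G i u) I)
    (hGanti : ∀ i, ∀ u ∈ I, StrictAntiOn (G i u) I)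
    (hE0 : ∀ i, ∀ u ∈ I, E i u u = 0)
    (hEcont : ∀ i, ∀ u ∈ I, ContinuousOn (E i u) I)
    (hEanti : ∀ i, ∀ u ∈ I, StrictAntiOn (E i u) I)
    (hkn' : 0 < n)
    -- the `n`-variable comparison `D^G(x) ≤ D^E(x)`:
    (hcomp : ∀ x : Fin n → ℝ, (∀ i, x i ∈ I) → ∀ yG yE : ℝ,
      yG ∈ Set.Icc (Finset.univ.inf' ⟨⟨0, hkn'⟩, Finset.mem_univ _⟩ x)
          (Finset.univ.sup' ⟨⟨0, hkn'⟩, Finset.mem_univ _⟩ x) →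
      (∑ i, G i (x i) yG) = 0 →
      yE ∈ Set.Icc (Finset.univ.inf' ⟨⟨0, hkn'⟩, Finset.mem_univ _⟩ x)
          (Finset.univ.sup' ⟨⟨0, hkn'⟩, Finset.mem_univ _⟩ x) →
      (∑ i, E i (x i) yE) = 0 →
      yG ≤ yE) :
    -- the `k`-variable comparison `D^{G_χ}(x) ≤ D^{E_χ}(x)`:
    ∀ x : Fin k → ℝ, (∀ j, x j ∈ I) → ∀ yG yE : ℝ,
      yG ∈ Set.Icc (Finset.univ.inf' ⟨⟨0, hk⟩, Finset.mem_univ _⟩ x)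
          (Finset.univ.sup' ⟨⟨0, hk⟩, Finset.mem_univ _⟩ x) →
      (∑ j, G (χ j) (x j) yG) = 0 →
      yE ∈ Set.Icc (Finset.univ.inf' ⟨⟨0, hk⟩, Finset.mem_univ _⟩ x)
          (Finset.univ.sup' ⟨⟨0, hk⟩, Finset.mem_univ _⟩ x) →
      (∑ j, E (χ j) (x j) yE) = 0 →
      yG ≤ yE := by
  classical
  intro x hx yG yE hyG hsG hyE hsE
  by_contra hlt
  push_neg at hlt
  have hne : (Finset.univ : Finset (Fin k)).Nonempty := ⟨⟨0, hk⟩, Finset.mem_univ _⟩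
  -- Icc (inf x) (sup x) ⊆ I
  obtain ⟨j0, -, hj0⟩ := Finset.exists_mem_eq_inf' hne x
  obtain ⟨j1, -, hj1⟩ := Finset.exists_mem_eq_sup' hne x
  have hIcc : Set.Icc (Finset.univ.inf' hne x) (Finset.univ.sup' hne x) ⊆ I := by
    rw [hj0, hj1]; exact hI.ordConnected.out (hx j0) (hx j1)
  have hyGI : yG ∈ I := hIcc hyG
  have hyEI : yE ∈ I := hIcc hyE
  -- extend x to n variables
  set x' : Fin n → ℝ := fun i => if h : ∃ j, χ j = i then x h.choose else yG with hx'def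
  have hx'χ : ∀ j, x' (χ j) = x j := by
    intro j
    have h : ∃ j', χ j' = χ j := ⟨j, rfl⟩
    simp only [hx'def, dif_pos h]
    exact congrArg x (hχ h.choose_spec)
  have hx'I : ∀ i, x' i ∈ I := by
    intro i
    by_cases h : ∃ j, χ j = i
    · simp only [hx'def, dif_pos h]; exact hx _
    · simp only [hx'def, dif_neg h]; exact hyGI
  -- sum splitting
  have hsplit : ∀ (F : Fin n → ℝ → ℝ → ℝ) (y : ℝ),
      (∑ i, F i (x' i) y) =
        (∑ i ∈ Finset.univ \ Finset.univ.image χ, F i yG y) +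
          ∑ j, F (χ j) (x j) y := by
    intro F y
    rw [← Finset.sum_sdiff (Finset.subset_univ (Finset.univ.image χ))]
    congr 1
    · apply Finset.sum_congr rfl
      intro i hi
      simp only [Finset.mem_sdiff, Finset.mem_image] at hi
      have h : ¬ ∃ j, χ j = i := by
        rintro ⟨j, hj⟩; exact hi.2 ⟨j, Finset.mem_univ _, hj⟩
      simp only [hx'def, dif_neg h]
    · rw [Finset.sum_image (fun a _ b _ h => hχ h)]
      exact Finset.sum_congr rfl fun j _ => by rw [hx'χ]
  -- the n-variable inf and sup
  have hne' : (Finset.univ : Finset (Fin n)).Nonempty := ⟨⟨0, hkn'⟩, Finset.mem_univ _⟩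
  set m' := Finset.univ.inf' hne' x' with hm'
  set M' := Finset.univ.sup' hne' x' with hM'
  obtain ⟨i0, -, hi0⟩ := Finset.exists_mem_eq_inf' hne' x'
  obtain ⟨i1, -, hi1⟩ := Finset.exists_mem_eq_sup' hne' x'
  have hm'I : m' ∈ I := by rw [hm', hi0]; exact hx'I i0
  have hM'I : M' ∈ I := by rw [hM', hi1]; exact hx'I i1
  have hIcc' : Set.Icc m' M' ⊆ I := hI.ordConnected.out hm'I hM'I
  have hm'le : m' ≤ Finset.univ.inf' hne x :=
    Finset.le_inf' _ _ fun j _ => by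
      rw [← hx'χ j]; exact Finset.inf'_le _ (Finset.mem_univ _)
  have hM'ge : Finset.univ.sup' hne x ≤ M' :=
    Finset.sup'_le _ _ fun j _ => by
      rw [← hx'χ j]; exact Finset.le_sup' _ (Finset.mem_univ _)
  have hyG' : yG ∈ Set.Icc m' M' :=
    ⟨le_trans hm'le hyG.1, le_trans hyG.2 hM'ge⟩
  have hm'M' : m' ≤ M' := hyG'.1.trans hyG'.2
  -- yG is the G-mean of x'
  have hsG' : (∑ i, G i (x' i) yG) = 0 := by
    rw [hsplit, hsG, add_zero]
    exact Finset.sum_eq_zero fun i _ => hG0 i yG hyGI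
  -- find the E-mean y' of x' by IVT
  set g : ℝ → ℝ := fun y => ∑ i, E i (x' i) y with hg
  have hgcont : ContinuousOn g (Set.Icc m' M') :=
    (continuousOn_finset_sum _ fun i _ => hEcont i _ (hx'I i)).mono hIcc'
  have hgM' : g M' ≤ 0 := by
    apply Finset.sum_nonpos
    intro i _
    rcases eq_or_lt_of_le (Finset.le_sup' x' (Finset.mem_univ i) : x' i ≤ M') with h | h
    · rw [h]; exact le_of_eq (hE0 i M' hM'I)
    · exact le_of_lt (by simpa [hE0 i (x' i) (hx'I i)] using hEanti i (x' i) (hx'I i) (hx'I i) hM'I h)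
  have hgm' : 0 ≤ g m' := by
    apply Finset.sum_nonneg
    intro i _
    rcases eq_or_lt_of_le (Finset.inf'_le x' (Finset.mem_univ i) : m' ≤ x' i) with h | h
    · rw [← h]; exact ge_of_eq (hE0 i m' hm'I)
    · exact le_of_lt (by simpa [hE0 i (x' i) (hx'I i)] using hEanti i (x' i) (hx'I i) hm'I (hx'I i) h)
  obtain ⟨y', hy'mem, hgy'⟩ := intermediate_value_Icc' hm'M' hgcont ⟨hgM', hgm'⟩
  have hy'I : y' ∈ I := hIcc' hy'mem
  -- apply the comparison
  have hle : yG ≤ y' := hcomp x' hx'I yG y' hyG' hsG' hy'mem hgy'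
  -- derive a contradiction
  have h1 : (∑ i ∈ Finset.univ \ Finset.univ.image χ, E i yG y') ≤ 0 := by
    apply Finset.sum_nonpos
    intro i _
    rcases eq_or_lt_of_le hle with h | h
    · rw [← h]; exact le_of_eq (hE0 i yG hyGI)
    · exact le_of_lt (by simpa [hE0 i yG hyGI] using hEanti i yG hyGI hyGI hy'I h)
  have h2 : (∑ j, E (χ j) (x j) y') < ∑ j, E (χ j) (x j) yE := by
    apply Finset.sum_lt_sum_of_nonempty hne
    intro j _
    exact hEanti (χ j) (x j) (hx j) hyEI hy'I (lt_of_lt_of_le hlt hle)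
  have : g y' < 0 := by
    rw [hg]
    calc (∑ i, E i (x' i) y')
        = (∑ i ∈ Finset.univ \ Finset.univ.image χ, E i yG y') +
            ∑ j, E (χ j) (x j) y' := hsplit E y'
      _ < 0 + 0 := by
          apply add_lt_add_of_le_of_lt h1
          rw [← hsE]; exact h2
      _ = 0 := by ring
  exact absurd hgy' (ne_of_lt this)
end
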